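/- arXiv:1905.09639 — 4 statements merged into one kernel-verified Lean document; each statement's English description precedes it below -/
import Mathlib

section
/- Let d ≥ 3 and n ≥ d+3. Let V be a generalized hypersphere of ℝ^d, let Q ⊆ V be a set of n−1 points, and let p ∈ ℝ^d \ V. Suppose that P = Q ∪ {p} is in spherical general position. Then P spans exactly binomial(n−1, d) ordinary hyperspheres. -/
/-- An affine hyperplane of `ℝ^m`: a nonempty affine subspace whose direction
has dimension `m - 1`. -/
def IsAffineHyperplane (m : ℕ) (S : Set (EuclideanSpace ℝ (Fin m))) : Prop :=
  ∃ A : AffineSubspace ℝ (EuclideanSpace ℝ (Fin m)),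
    (A : Set (EuclideanSpace ℝ (Fin m))).Nonempty ∧
    Module.finrank ℝ A.direction = m - 1 ∧ S = ↑A

/-- A generalized hypersphere of `ℝ^d`: a metric sphere of positive radius
or an affine hyperplane. -/
def IsHypersphere (d : ℕ) (S : Set (EuclideanSpace ℝ (Fin d))) : Prop :=
  (∃ (c : EuclideanSpace ℝ (Fin d)) (r : ℝ), 0 < r ∧ S = Metric.sphere c r) ∨
  IsAffineHyperplane d S

/-- A finite point set is in spherical general position if no `d+1` of its points
lie on two distinct generalized hyperspheres. -/
def SphericalGenPos (d : ℕ) (P : Finset (EuclideanSpace ℝ (Fin d))) : Prop :=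
  ∀ S₁ S₂ : Set (EuclideanSpace ℝ (Fin d)), IsHypersphere d S₁ → IsHypersphere d S₂ →
    S₁ ≠ S₂ → ((P : Set (EuclideanSpace ℝ (Fin d))) ∩ S₁ ∩ S₂).ncard ≤ d

/-- The set of generalized hyperspheres containing exactly `k` points of `P`.
For `k = d+1` these are the ordinary hyperspheres of `P`. -/
def kPointSpheres (d : ℕ) (P : Finset (EuclideanSpace ℝ (Fin d))) (k : ℕ) :
    Set (Set (EuclideanSpace ℝ (Fin d))) :=
  {S | IsHypersphere d S ∧ ((P : Set (EuclideanSpace ℝ (Fin d))) ∩ S).ncard = k}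

open Module in
lemma exists_hypersphere_through {d : ℕ} (hd : 1 ≤ d)
    (s : Finset (EuclideanSpace ℝ (Fin d))) (hs : s.card = d + 1) :
    ∃ S : Set (EuclideanSpace ℝ (Fin d)), IsHypersphere d S ∧ (↑s : Set _) ⊆ S := by
  unfold IsHypersphere IsAffineHyperplane
  classical
  have he : s.card = d + 1 := hs
  let e : Fin (d + 1) ≃ s := (s.equivFin.trans (finCongr he)).symm
  let pts : Fin (d + 1) → EuclideanSpace ℝ (Fin d) := fun i => (e i : _)
  have hrange : Set.range pts = (↑s : Set (EuclideanSpace ℝ (Fin d))) := by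
    ext x
    constructor
    · rintro ⟨i, rfl⟩; exact (e i).2
    · intro hx; exact ⟨e.symm ⟨x, hx⟩, by simp [pts]⟩
  by_cases h : finrank ℝ (vectorSpan ℝ (Set.range pts)) = d
  · -- affinely independent: take circumsphere
    have hindep : AffineIndependent ℝ pts :=
      (affineIndependent_iff_finrank_vectorSpan_eq ℝ pts (by simp)).2 h
    let σ : Affine.Simplex ℝ (EuclideanSpace ℝ (Fin d)) d := ⟨pts, hindep⟩
    refine ⟨Metric.sphere σ.circumcenter σ.circumradius, Or.inl ⟨σ.circumcenter, σ.circumradius,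
      ?_, rfl⟩, ?_⟩
    · rcases lt_or_eq_of_le σ.circumradius_nonneg with h0 | h0
      · exact h0
      · exfalso
        have h01 : pts 0 ≠ pts 1 := by
          intro hh
          have := hindep.injective hh
          simp at this
          omega
        have e0 := σ.dist_circumcenter_eq_circumradius 0
        have e1 := σ.dist_circumcenter_eq_circumradius 1
        rw [← h0] at e0 e1
        have : σ.points 0 = σ.points 1 := by rw [dist_eq_zero.1 e0, dist_eq_zero.1 e1]
        exact h01 this
    · intro x hx
      rw [← hrange] at hx
      rcases hx with ⟨i, rfl⟩
      exact Metric.mem_sphere.2 (σ.dist_circumcenter_eq_circumradius i)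
  · -- degenerate: contained in a hyperplane
    have hfd : finrank ℝ (EuclideanSpace ℝ (Fin d)) = d := finrank_euclideanSpace_fin
    have hle : finrank ℝ (vectorSpan ℝ (Set.range pts)) ≤ d := by
      have := finrank_vectorSpan_range_le ℝ pts (n := d) (by simp)
      exact this
    have hlt : finrank ℝ (vectorSpan ℝ (Set.range pts)) < d := lt_of_le_of_ne hle h
    set W₀ : Submodule ℝ (EuclideanSpace ℝ (Fin d)) := vectorSpan ℝ (Set.range pts)
    have hW₀ : W₀ᗮ ≠ ⊥ := by
      intro hb
      have := Submodule.finrank_add_finrank_orthogonal W₀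
      rw [hb, hfd] at this
      simp at this
      omega
    obtain ⟨v, hvW, hv0⟩ := Submodule.exists_mem_ne_zero_of_ne_bot hW₀
    have hvspan : (ℝ ∙ v) ≤ W₀ᗮ := by
      rw [Submodule.span_le]; simpa using hvW
    have hWle : W₀ ≤ (ℝ ∙ v)ᗮ :=
      le_trans (Submodule.le_orthogonal_orthogonal W₀) (Submodule.orthogonal_le hvspan)
    have hWrank : finrank ℝ ((ℝ ∙ v)ᗮ : Submodule ℝ (EuclideanSpace ℝ (Fin d))) = d - 1 := by
      have h1 : finrank ℝ (ℝ ∙ v : Submodule ℝ (EuclideanSpace ℝ (Fin d))) = 1 := finrank_span_singleton hv0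
      have := Submodule.finrank_add_finrank_orthogonal (ℝ ∙ v : Submodule ℝ (EuclideanSpace ℝ (Fin d)))
      rw [h1, hfd] at this
      omega
    have hsne : s.Nonempty := by rw [← Finset.card_pos, hs]; omega
    obtain ⟨q, hq⟩ := hsne
    refine ⟨↑(AffineSubspace.mk' q ((ℝ ∙ v)ᗮ)), Or.inr ⟨AffineSubspace.mk' q ((ℝ ∙ v)ᗮ),
      ⟨q, AffineSubspace.self_mem_mk' q _⟩, ?_, rfl⟩, ?_⟩
    · rw [AffineSubspace.direction_mk']; exact hWrank
    · intro x hx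
      rw [AffineSubspace.mem_coe, AffineSubspace.mem_mk']
      exact hWle (vsub_mem_vectorSpan ℝ (by rw [hrange]; exact hx) (by rw [hrange]; exact hq))


/-- `n-1` points on a generalized hypersphere together with a point
off it span exactly `binomial (n-1) d` ordinary hyperspheres. -/
theorem ordinary_hyperspheres_of_near_spherical_set
    (d n : ℕ) (hd : 3 ≤ d) (hn : d + 3 ≤ n)
    (V : Set (EuclideanSpace ℝ (Fin d))) (hV : IsHypersphere d V)
    (Q : Finset (EuclideanSpace ℝ (Fin d))) (hQV : (Q : Set _) ⊆ V)
    (hQcard : Q.card = n - 1)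
    (p : EuclideanSpace ℝ (Fin d)) (hp : p ∉ V)
    (P : Finset (EuclideanSpace ℝ (Fin d))) (hP : (P : Set _) = (Q : Set _) ∪ {p})
    (hgen : SphericalGenPos d P) :
    (kPointSpheres d P (d + 1)).ncard = (n - 1).choose d := by
  classical
  have hpQ : p ∉ (Q : Set (EuclideanSpace ℝ (Fin d))) := fun h => hp (hQV h)
  have hQP : (Q : Set (EuclideanSpace ℝ (Fin d))) ⊆ (P : Set (EuclideanSpace ℝ (Fin d))) := by rw [hP]; exact Set.subset_union_left
  have hpP : p ∈ (P : Set (EuclideanSpace ℝ (Fin d))) := by rw [hP]; exact Set.mem_union_right _ rfl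
  have hPV : (P : Set (EuclideanSpace ℝ (Fin d))) ∩ V = (Q : Set (EuclideanSpace ℝ (Fin d))) := by
    rw [hP]
    ext x
    simp only [Set.mem_inter_iff, Set.mem_union, Set.mem_singleton_iff]
    constructor
    · rintro ⟨hx | rfl, hxV⟩
      · exact hx
      · exact absurd hxV hp
    · intro hx
      exact ⟨Or.inl hx, hQV hx⟩
  -- key consequence of general position
  have key : ∀ S : Set (EuclideanSpace ℝ (Fin d)), IsHypersphere d S → S ≠ V →
      ((P : Set (EuclideanSpace ℝ (Fin d))) ∩ S ∩ V).ncard ≤ d := fun S hS hne => hgen S V hS hV hne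
  -- basic facts about members of kPointSpheres
  have hmem : ∀ S ∈ kPointSpheres d P (d + 1), S ≠ V ∧ p ∈ S := by
    rintro S ⟨hS, hcard⟩
    have hSV : S ≠ V := by
      rintro rfl
      rw [hPV, Set.ncard_coe_finset, hQcard] at hcard
      omega
    refine ⟨hSV, ?_⟩
    by_contra hpS
    have hsub : (P : Set (EuclideanSpace ℝ (Fin d))) ∩ S ⊆ V := by
      rintro x ⟨hxP, hxS⟩
      rw [hP] at hxP
      rcases hxP with hx | rfl
      · exact hQV hx
      · exact absurd hxS hpS
    have heq : (P : Set (EuclideanSpace ℝ (Fin d))) ∩ S ∩ V = (P : Set (EuclideanSpace ℝ (Fin d))) ∩ S :=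
      Set.inter_eq_self_of_subset_left hsub
    have := key S hS hSV
    rw [heq, hcard] at this
    omega
  -- the bijection
  have hbij : Set.BijOn (fun S : Set (EuclideanSpace ℝ (Fin d)) => (Q : Set (EuclideanSpace ℝ (Fin d))) ∩ S) (kPointSpheres d P (d + 1))
      ((fun t : Finset (EuclideanSpace ℝ (Fin d)) => (↑t : Set (EuclideanSpace ℝ (Fin d)))) '' ↑(Q.powersetCard d)) := by
    refine ⟨?_, ?_, ?_⟩
    · -- maps to
      rintro S hSK
      obtain ⟨hSV, hpS⟩ := hmem S hSK
      obtain ⟨hS, hcard⟩ := hSK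
      have hfin : ((Q : Set (EuclideanSpace ℝ (Fin d))) ∩ S).Finite := (Q.finite_toSet).inter_of_left S
      have hQS : (Q : Set (EuclideanSpace ℝ (Fin d))) ∩ S = ((P : Set (EuclideanSpace ℝ (Fin d))) ∩ S) \ {p} := by
        rw [hP]
        ext x
        simp only [Set.mem_inter_iff, Set.mem_union, Set.mem_diff, Set.mem_singleton_iff]
        constructor
        · rintro ⟨hxQ, hxS⟩
          exact ⟨⟨Or.inl hxQ, hxS⟩, fun h => hpQ (h ▸ hxQ)⟩
        · rintro ⟨⟨hx | rfl, hxS⟩, hxp⟩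
          · exact ⟨hx, hxS⟩
          · exact absurd rfl hxp
      have hncard : ((Q : Set (EuclideanSpace ℝ (Fin d))) ∩ S).ncard = d := by
        rw [hQS, Set.ncard_diff_singleton_of_mem (Set.mem_inter hpP hpS), hcard]
        omega
      refine ⟨hfin.toFinset, ?_, by simp⟩
      rw [Finset.mem_coe, Finset.mem_powersetCard]
      constructor
      · intro x hx
        have := (hfin.mem_toFinset).1 hx
        exact this.1
      · rw [← Set.ncard_coe_finset, hfin.coe_toFinset]
        exact hncard
    · -- injective
      rintro S₁ hS₁ S₂ hS₂ heq
      by_contra hne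
      obtain ⟨_, hpS₁⟩ := hmem S₁ hS₁
      obtain ⟨_, hpS₂⟩ := hmem S₂ hS₂
      obtain ⟨h₁, hcard₁⟩ := hS₁
      have heq' : (↑Q : Set (EuclideanSpace ℝ (Fin d))) ∩ S₁ = ↑Q ∩ S₂ := heq
      have hsub : (P : Set (EuclideanSpace ℝ (Fin d))) ∩ S₁ ⊆ S₂ := by
        rintro x ⟨hxP, hxS⟩
        rw [hP] at hxP
        rcases hxP with hx | rfl
        · have : x ∈ (Q : Set (EuclideanSpace ℝ (Fin d))) ∩ S₂ := heq' ▸ (⟨hx, hxS⟩ : x ∈ (Q : Set (EuclideanSpace ℝ (Fin d))) ∩ S₁)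
          exact this.2
        · exact hpS₂
      have h12 : (P : Set (EuclideanSpace ℝ (Fin d))) ∩ S₁ ∩ S₂ = (P : Set (EuclideanSpace ℝ (Fin d))) ∩ S₁ :=
        Set.inter_eq_self_of_subset_left hsub
      have := hgen S₁ S₂ h₁ hS₂.1 hne
      rw [h12, hcard₁] at this
      omega
    · -- surjective
      rintro t ⟨T, hT, rfl⟩
      rw [Finset.mem_coe, Finset.mem_powersetCard] at hT
      obtain ⟨hTQ, hTcard⟩ := hT
      have hpT : p ∉ T := fun h => hpQ (hTQ h)
      have hicard : (insert p T).card = d + 1 := by rw [Finset.card_insert_of_notMem hpT, hTcard]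
      obtain ⟨S, hS, hsub⟩ := exists_hypersphere_through (by omega) (insert p T) hicard
      have hpS : p ∈ S := hsub (by simp)
      have hSV : S ≠ V := fun h => hp (h ▸ hpS)
      have hTS : (T : Set (EuclideanSpace ℝ (Fin d))) ⊆ S := fun x hx => hsub (by simp [hx])
      have hTP : (T : Set (EuclideanSpace ℝ (Fin d))) ⊆ (P : Set (EuclideanSpace ℝ (Fin d))) := fun x hx => hQP (hTQ hx)
      have hTV : (T : Set (EuclideanSpace ℝ (Fin d))) ⊆ V := fun x hx => hQV (hTQ hx)
      have hPS : (P : Set (EuclideanSpace ℝ (Fin d))) ∩ S = ↑(insert p T) := by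
        apply Set.Subset.antisymm
        · rintro x ⟨hxP, hxS⟩
          rw [hP] at hxP
          rcases hxP with hx | rfl
          · by_contra hxT
            simp only [Finset.coe_insert, Set.mem_insert_iff, Finset.mem_coe] at hxT
            push_neg at hxT
            obtain ⟨hxp, hxT⟩ := hxT
            have hsub2 : (↑(insert x T) : Set (EuclideanSpace ℝ (Fin d))) ⊆ (P : Set (EuclideanSpace ℝ (Fin d))) ∩ S ∩ V := by
              intro y hy
              simp only [Finset.coe_insert, Set.mem_insert_iff, Finset.mem_coe] at hy
              rcases hy with rfl | hy
              · exact ⟨⟨hQP hx, hxS⟩, hQV hx⟩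
              · exact ⟨⟨hTP hy, hTS hy⟩, hTV hy⟩
            have hle := Set.ncard_le_ncard hsub2
              (((P.finite_toSet).inter_of_left S).inter_of_left V)
            rw [Set.ncard_coe_finset, Finset.card_insert_of_notMem (by
              intro h; exact hxT h), hTcard] at hle
            have := key S hS hSV
            omega
          · simp
        · intro x hx
          simp only [Finset.coe_insert, Set.mem_insert_iff, Finset.mem_coe] at hx
          rcases hx with rfl | hx
          · exact ⟨hpP, hpS⟩
          · exact ⟨hTP hx, hTS hx⟩
      refine ⟨S, ⟨hS, by rw [hPS, Set.ncard_coe_finset, hicard]⟩, ?_⟩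
      -- Q ∩ S = T
      apply Set.Subset.antisymm
      · rintro x ⟨hxQ, hxS⟩
        have : x ∈ (P : Set (EuclideanSpace ℝ (Fin d))) ∩ S := ⟨hQP hxQ, hxS⟩
        rw [hPS] at this
        simp only [Finset.coe_insert, Set.mem_insert_iff, Finset.mem_coe] at this
        rcases this with rfl | hx
        · exact absurd hxQ hpQ
        · exact hx
      · intro x hx
        exact ⟨hTQ hx, hTS hx⟩
  -- conclude the count
  have h1 : (kPointSpheres d P (d + 1)).ncard =
      ((fun t : Finset (EuclideanSpace ℝ (Fin d)) => (↑t : Set (EuclideanSpace ℝ (Fin d)))) '' ↑(Q.powersetCard d)).ncard := by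
    rw [← hbij.image_eq, Set.ncard_image_of_injOn hbij.injOn]
  rw [h1, Set.ncard_image_of_injOn (Finset.coe_injective.injOn),
    Set.ncard_coe_finset, Finset.card_powersetCard, hQcard]
end

section
/- Let d ≥ 2 and let p₁, …, p_{d+1} be distinct points of ℝ^d. Then the points p₁, …, p_{d+1} lie on two distinct generalized hyperspheres of ℝ^d (equivalently, they lie on a (d−2)-sphere or a (d−2)-flat) if and only if the d+1 points π⁻¹(p₁), …, π⁻¹(p_{d+1}) of ℝ^{d+1} are affinely dependent, where π⁻¹ is inverse stereographic projection. -/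
/-- Inverse stereographic projection `ℝ^d → S^d ⊆ ℝ^{d+1}`,
`x ↦ (2x, ‖x‖² − 1)/(‖x‖² + 1)`. -/
noncomputable def invStereo (d : ℕ) (x : EuclideanSpace ℝ (Fin d)) :
    EuclideanSpace ℝ (Fin (d + 1)) :=
  (EuclideanSpace.equiv (Fin (d + 1)) ℝ).symm fun i =>
    if h : (i : ℕ) < d then 2 * x ⟨i, h⟩ / (‖x‖ ^ 2 + 1)
    else (‖x‖ ^ 2 - 1) / (‖x‖ ^ 2 + 1)

/-- The north pole `N = (0, …, 0, 1)` of the unit sphere `S^d ⊆ ℝ^{d+1}`. -/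
noncomputable def northPole (d : ℕ) : EuclideanSpace ℝ (Fin (d + 1)) :=
  EuclideanSpace.single (Fin.last d) (1 : ℝ)

/-- Stereographic projection from the north pole, mapping `S^d \ {N}` onto
the hyperplane `x_{d+1} = 0`, identified with `ℝ^d`. -/
noncomputable def stereo (d : ℕ) (q : EuclideanSpace ℝ (Fin (d + 1))) :
    EuclideanSpace ℝ (Fin d) :=
  (EuclideanSpace.equiv (Fin d) ℝ).symm fun i =>
    q i.castSucc / (1 - q (Fin.last d))


section TwoHSAux
open RealInnerProductSpace
noncomputable section
namespace TwoHS
variable (d : ℕ)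


abbrev E (d : ℕ) := EuclideanSpace ℝ (Fin d)
abbrev W (d : ℕ) := EuclideanSpace ℝ (Fin (d+2))

def alphaC (u : W d) : ℝ := u ⟨d, by omega⟩ + u ⟨d+1, by omega⟩
def betaC (u : W d) : E d := WithLp.toLp 2 (fun i : Fin d => 2 * u ⟨i.1, by omega⟩)
def gammaC (u : W d) : ℝ := u ⟨d+1, by omega⟩ - u ⟨d, by omega⟩

def liftP (x : E d) : W d :=
  WithLp.toLp 2 (fun i : Fin (d+2) => if h : (i : ℕ) < d then 2 * x ⟨i, h⟩
    else if (i : ℕ) = d then ‖x‖ ^ 2 - 1 else ‖x‖ ^ 2 + 1)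

def solC (u : W d) : Set (E d) :=
  {x | alphaC d u * ‖x‖ ^ 2 + ⟪betaC d u, x⟫ + gammaC d u = 0}

lemma inner_liftP (u : W d) (x : E d) :
    ⟪liftP d x, u⟫ = alphaC d u * ‖x‖ ^ 2 + ⟪betaC d u, x⟫ + gammaC d u := by
  simp only [PiLp.inner_apply, RCLike.inner_apply, conj_trivial]
  rw [Fin.sum_univ_castSucc, Fin.sum_univ_castSucc]
  have h1 : ∀ i : Fin d, liftP d x (i.castSucc.castSucc) * u (i.castSucc.castSucc)
      = 2 * u ⟨i.1, by omega⟩ * x i := by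
    intro i
    have : (i.castSucc.castSucc : ℕ) < d := i.2
    rw [liftP, PiLp.toLp_apply]
    rw [dif_pos this]
    have : (⟨(i.castSucc.castSucc : ℕ), this⟩ : Fin d) = i := by ext; simp
    rw [this]
    have : (i.castSucc.castSucc : Fin (d+2)) = ⟨i.1, by omega⟩ := by ext; simp
    rw [this]; ring
  rw [Finset.sum_congr rfl (fun i _ => (mul_comm _ _).trans (h1 i))]
  have h2 : liftP d x ((Fin.last d).castSucc) = ‖x‖ ^ 2 - 1 := by
    rw [liftP, PiLp.toLp_apply]; simp
  have h3 : liftP d x (Fin.last (d+1)) = ‖x‖ ^ 2 + 1 := by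
    rw [liftP, PiLp.toLp_apply]
    have : ¬ ((Fin.last (d+1) : ℕ) < d) := by simp [Fin.last]
    rw [dif_neg this]
    have h' : ¬ ((Fin.last (d+1) : ℕ) = d) := by simp [Fin.last]
    rw [if_neg h']

  rw [h2, h3]
  have h4 : ((Fin.last d).castSucc : Fin (d+2)) = ⟨d, by omega⟩ := by ext; simp
  have h5 : (Fin.last (d+1) : Fin (d+2)) = ⟨d+1, by omega⟩ := by ext; simp
  rw [h4, h5, alphaC, gammaC]
  simp only [betaC, PiLp.toLp_apply]
  rw [Finset.sum_congr rfl (fun i _ => mul_comm (2 * u ⟨i.1, by omega⟩) (x i))]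
  ring

lemma alphaC_smul (t : ℝ) (u : W d) : alphaC d (t • u) = t * alphaC d u := by
  simp [alphaC, mul_add]
lemma gammaC_smul (t : ℝ) (u : W d) : gammaC d (t • u) = t * gammaC d u := by
  simp [gammaC, mul_sub]
lemma betaC_smul (t : ℝ) (u : W d) : betaC d (t • u) = t • betaC d u := by
  ext i
  simp [betaC]
  ring
lemma alphaC_sub (u v : W d) : alphaC d (u - v) = alphaC d u - alphaC d v := by
  simp [alphaC]; ring
lemma gammaC_sub (u v : W d) : gammaC d (u - v) = gammaC d u - gammaC d v := by
  simp [gammaC]; ring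
lemma betaC_sub (u v : W d) : betaC d (u - v) = betaC d u - betaC d v := by
  ext i
  simp [betaC]
  ring

lemma coeff_zero (u : W d) (hα : alphaC d u = 0) (hβ : betaC d u = 0)
    (hγ : gammaC d u = 0) : u = 0 := by
  ext i
  rcases lt_or_ge (i : ℕ) d with h | h
  · have hb := congrArg (fun v : E d => v ⟨i.1, h⟩) hβ
    simp only [betaC, PiLp.toLp_apply] at hb
    have : (⟨i.1, by omega⟩ : Fin (d+2)) = i := by ext; rfl
    rw [this] at hb
    have : (2:ℝ) * u i = 0 := hb
    simpa using by linarith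
  · have hd : u ⟨d, by omega⟩ = 0 ∧ u ⟨d+1, by omega⟩ = 0 := by
      rw [alphaC] at hα; rw [gammaC] at hγ
      constructor <;> linarith
    have : (i : ℕ) = d ∨ (i : ℕ) = d + 1 := by omega
    rcases this with h' | h'
    · have : i = ⟨d, by omega⟩ := by ext; exact h'
      rw [this]; exact hd.1
    · have : i = ⟨d+1, by omega⟩ := by ext; exact h'
      rw [this]; exact hd.2

lemma exists_coeff (α : ℝ) (β : E d) (γ : ℝ) :
    ∃ u : W d, alphaC d u = α ∧ betaC d u = β ∧ gammaC d u = γ := by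
  refine ⟨WithLp.toLp 2 (fun i => if h : (i : ℕ) < d then β ⟨i, h⟩ / 2
    else if (i : ℕ) = d then (α - γ)/2 else (α + γ)/2 : Fin (d+2) → ℝ), ?_, ?_, ?_⟩
  · simp only [alphaC, PiLp.toLp_apply]
    rw [dif_neg (by omega), dif_neg (by omega)]
    norm_num
    ring
  · ext i
    simp only [betaC, PiLp.toLp_apply]
    rw [dif_pos i.2]
    have : (⟨i.1, i.2⟩ : Fin d) = i := by ext; rfl
    rw [this]; ring
  · simp only [gammaC, PiLp.toLp_apply]
    rw [dif_neg (by omega), dif_neg (by omega)]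
    norm_num
    ring

lemma solC_smul {t : ℝ} (ht : t ≠ 0) (u : W d) : solC d (t • u) = solC d u := by
  ext x
  simp only [solC, Set.mem_setOf_eq, alphaC_smul, gammaC_smul, betaC_smul,
    real_inner_smul_left]
  constructor
  · intro h
    have : t * (alphaC d u * ‖x‖ ^ 2 + ⟪betaC d u, x⟫ + gammaC d u) = 0 := by
      rw [mul_add, mul_add]; linarith [h]
    rcases mul_eq_zero.1 this with h' | h'
    · exact absurd h' ht
    · exact h'
  · intro h
    have : t * (alphaC d u * ‖x‖ ^ 2 + ⟪betaC d u, x⟫ + gammaC d u) = t * 0 := by rw [h]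
    rw [mul_zero, mul_add, mul_add] at this
    linarith [this]




def solC' (α : ℝ) (β : E d) (γ : ℝ) : Set (E d) :=
  {x | α * ‖x‖ ^ 2 + ⟪β, x⟫ + γ = 0}

-- an affine functional vanishing on a sphere of positive radius is zero
lemma affine_vanish_sphere (hd : 1 ≤ d) {b : E d} {e : ℝ} {c : E d} {r : ℝ} (hr : 0 < r)
    (h : ∀ x ∈ Metric.sphere c r, ⟪b, x⟫ + e = 0) : b = 0 ∧ e = 0 := by
  have key : ∀ w : E d, ‖w‖ = 1 → ⟪b, w⟫ = 0 ∧ ⟪b, c⟫ + e = 0 := by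
    intro w hw
    have hp : c + r • w ∈ Metric.sphere c r := by
      simp [mem_sphere_iff_norm, norm_smul, hw, abs_of_pos hr]
    have hm : c + (-r) • w ∈ Metric.sphere c r := by
      simp [mem_sphere_iff_norm, norm_smul, hw, abs_of_pos hr]
    have e1 := h _ hp
    have e2 := h _ hm
    rw [inner_add_right, real_inner_smul_right] at e1 e2
    constructor
    · have : 2 * r * ⟪b, w⟫ = 0 := by linarith
      have h2r : (2 : ℝ) * r ≠ 0 := by positivity
      exact (mul_eq_zero.1 this).resolve_left h2r
    · nlinarith
  have hb : b = 0 := by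
    by_contra hb
    have hnb : ‖b‖ ≠ 0 := by simpa using hb
    have := (key (‖b‖⁻¹ • b) (by simp [norm_smul, inv_mul_cancel₀ hnb])).1
    rw [real_inner_smul_right, real_inner_self_eq_norm_sq] at this
    rcases mul_eq_zero.1 this with h' | h'
    · exact hnb (by simpa using h')
    · exact hnb (by simpa using pow_eq_zero_iff (n := 2) (by norm_num) |>.1 h')
  refine ⟨hb, ?_⟩
  have := (key (EuclideanSpace.single ⟨0, hd⟩ (1:ℝ)) (by simp)).2
  rw [hb] at this
  simpa using this

-- a nonzero vector orthogonal to β exists when 2 ≤ d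
lemma exists_orth (hd : 2 ≤ d) (β : E d) (hβ : β ≠ 0) :
    ∃ w : E d, w ≠ 0 ∧ ⟪β, w⟫ = 0 := by
  have h1 : Module.finrank ℝ (ℝ ∙ β) = 1 := finrank_span_singleton hβ
  have h2 := Submodule.finrank_add_finrank_orthogonal (K := (ℝ ∙ β)) (𝕜 := ℝ)
  rw [h1, finrank_euclideanSpace_fin] at h2
  have : (ℝ ∙ β)ᗮ ≠ ⊥ := by
    intro hb
    rw [hb, finrank_bot] at h2
    omega
  rcases Submodule.exists_mem_ne_zero_of_ne_bot this with ⟨w, hw, hw0⟩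
  exact ⟨w, hw0, (Submodule.mem_orthogonal_singleton_iff_inner_right).1 hw⟩

lemma sphere_canonical {c : E d} {r : ℝ} (hr : 0 < r) :
    Metric.sphere c r = solC' d 1 (-(2:ℝ) • c) (‖c‖^2 - r^2) := by
  ext x
  simp only [solC', Set.mem_setOf_eq, mem_sphere_iff_norm]
  rw [real_inner_smul_left]
  constructor
  · intro hx
    have : ‖x - c‖ ^ 2 = r ^ 2 := by rw [hx]
    rw [norm_sub_sq_real] at this
    rw [real_inner_comm] at this
    nlinarith [this]
  · intro hx
    have h2 : ‖x - c‖ ^ 2 = r ^ 2 := by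
      rw [norm_sub_sq_real, real_inner_comm]
      nlinarith [hx]
    have := congrArg Real.sqrt h2
    rwa [Real.sqrt_sq (norm_nonneg _), Real.sqrt_sq hr.le] at this

lemma hyperplane_canonical (hd : 1 ≤ d) {S : Set (E d)} (hS : IsAffineHyperplane d S) :
    ∃ (β₀ : E d) (γ₀ : ℝ), β₀ ≠ 0 ∧ S = solC' d 0 β₀ γ₀ := by
  rcases hS with ⟨A, ⟨x₀, hx₀⟩, hrank, rfl⟩
  have hfd := Submodule.finrank_add_finrank_orthogonal (K := A.direction) (𝕜 := ℝ)
  rw [hrank, finrank_euclideanSpace_fin] at hfd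
  have hne : A.directionᗮ ≠ ⊥ := by
    intro hb; rw [hb, finrank_bot] at hfd
    omega
  rcases Submodule.exists_mem_ne_zero_of_ne_bot hne with ⟨β₀, hβm, hβ0⟩
  refine ⟨β₀, -⟪β₀, x₀⟫, hβ0, ?_⟩
  have hdir : A.direction = (ℝ ∙ β₀)ᗮ := by
    apply Submodule.eq_of_le_of_finrank_eq
    · intro v hv
      rw [Submodule.mem_orthogonal_singleton_iff_inner_right]
      rw [Submodule.mem_orthogonal] at hβm
      rw [real_inner_comm]; exact hβm v hv
    · have h1 : Module.finrank ℝ (ℝ ∙ β₀) = 1 := finrank_span_singleton hβ0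
      have h2 := Submodule.finrank_add_finrank_orthogonal (K := (ℝ ∙ β₀)) (𝕜 := ℝ)
      rw [h1, finrank_euclideanSpace_fin] at h2
      rw [hrank]
      show (d - 1 : ℕ) = Module.finrank ℝ (ℝ ∙ β₀)ᗮ
      omega
  ext x
  rw [AffineSubspace.mem_coe, ← AffineSubspace.vsub_right_mem_direction_iff_mem hx₀, hdir,
    Submodule.mem_orthogonal_singleton_iff_inner_right, vsub_eq_sub, inner_sub_right]
  simp only [solC', Set.mem_setOf_eq]
  constructor <;> intro h <;> linarith

lemma canonical_hyperplane {β₀ : E d} (γ₀ : ℝ) (hβ₀ : β₀ ≠ 0) :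
    IsAffineHyperplane d (solC' d 0 β₀ γ₀) := by
  have hnb : ‖β₀‖ ≠ 0 := by simpa using hβ₀
  set x₀ : E d := (-(γ₀ / ‖β₀‖^2)) • β₀ with hx₀
  have hix : ⟪β₀, x₀⟫ = -γ₀ := by
    rw [hx₀, real_inner_smul_right, real_inner_self_eq_norm_sq]
    field_simp
  refine ⟨AffineSubspace.mk' x₀ (ℝ ∙ β₀)ᗮ, ⟨x₀, AffineSubspace.self_mem_mk' _ _⟩, ?_, ?_⟩
  · rw [AffineSubspace.direction_mk']
    have h1 : Module.finrank ℝ (ℝ ∙ β₀) = 1 := finrank_span_singleton hβ₀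
    have h2 := Submodule.finrank_add_finrank_orthogonal (K := (ℝ ∙ β₀)) (𝕜 := ℝ)
    rw [h1, finrank_euclideanSpace_fin] at h2
    show Module.finrank ℝ (ℝ ∙ β₀)ᗮ = d - 1
    omega
  · ext x
    rw [AffineSubspace.mem_coe, AffineSubspace.mem_mk',
      Submodule.mem_orthogonal_singleton_iff_inner_right, vsub_eq_sub, inner_sub_right]
    simp only [solC', Set.mem_setOf_eq]
    rw [hix]
    constructor <;> intro h <;> linarith

lemma sphere_no_line {c : E d} {r : ℝ} {x₀ w : E d} (h0 : x₀ ∈ Metric.sphere c r)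
    (hp : x₀ + w ∈ Metric.sphere c r) (hm : x₀ - w ∈ Metric.sphere c r) : w = 0 := by
  rw [mem_sphere_iff_norm] at h0 hp hm
  have e0 : ‖x₀ - c‖ ^ 2 = r ^ 2 := by rw [h0]
  have ep : ‖(x₀ - c) + w‖ ^ 2 = r ^ 2 := by
    rw [show (x₀ - c) + w = x₀ + w - c by abel, hp]
  have em : ‖(x₀ - c) - w‖ ^ 2 = r ^ 2 := by
    rw [show (x₀ - c) - w = x₀ - w - c by abel, hm]
  rw [norm_add_sq_real] at ep
  rw [norm_sub_sq_real] at em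
  have : ‖w‖ ^ 2 = 0 := by nlinarith
  have := pow_eq_zero_iff (n := 2) (by norm_num) |>.1 this
  exact norm_eq_zero.1 this

lemma base_point_mem {β₀ : E d} (γ₀ : ℝ) (hβ₀ : β₀ ≠ 0) :
    ⟪β₀, (-(γ₀ / ‖β₀‖^2)) • β₀⟫ = -γ₀ := by
  have hnb : ‖β₀‖ ≠ 0 := by simpa using hβ₀
  rw [real_inner_smul_right, real_inner_self_eq_norm_sq]
  field_simp

lemma coeff_of_sphere (hd : 2 ≤ d) {α : ℝ} {β : E d} {γ : ℝ} {c : E d} {r : ℝ} (hr : 0 < r)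
    (h : solC' d α β γ = Metric.sphere c r) (hnd : α ≠ 0 ∨ β ≠ 0) :
    α ≠ 0 ∧ β = (-(2*α)) • c ∧ γ = α * (‖c‖^2 - r^2) := by
  have hα : α ≠ 0 := by
    intro hα0
    subst hα0
    have hβ : β ≠ 0 := hnd.resolve_left (by simp)
    set x₀ : E d := (-(γ / ‖β‖^2)) • β with hx₀
    have hix : ⟪β, x₀⟫ = -γ := base_point_mem d γ hβ
    rcases exists_orth d hd β hβ with ⟨w, hw0, hwo⟩
    have h0 : x₀ ∈ solC' d 0 β γ := by
      simp only [solC', Set.mem_setOf_eq, hix]; ring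
    have hp : x₀ + w ∈ solC' d 0 β γ := by
      simp only [solC', Set.mem_setOf_eq, inner_add_right, hix, hwo]; ring
    have hm : x₀ - w ∈ solC' d 0 β γ := by
      simp only [solC', Set.mem_setOf_eq, inner_sub_right, hix, hwo]; ring
    rw [h] at h0 hp hm
    exact hw0 (sphere_no_line d h0 hp hm)
  have key : (β + (2*α) • c) = 0 ∧ (γ - α * (‖c‖^2 - r^2)) = 0 := by
    apply affine_vanish_sphere d (by omega) hr
    intro x hx
    have hx' : x ∈ solC' d α β γ := by rw [h]; exact hx
    have e1 : α * ‖x‖^2 + ⟪β, x⟫ + γ = 0 := hx'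
    rw [mem_sphere_iff_norm] at hx
    have e2 : ‖x - c‖^2 = r^2 := by rw [hx]
    rw [norm_sub_sq_real] at e2
    rw [inner_add_left, real_inner_smul_left, real_inner_comm x c]
    linear_combination e1 - α * e2
  refine ⟨hα, ?_, by linarith [key.2]⟩
  rw [neg_smul]
  have h1 := key.1
  rw [add_eq_zero_iff_eq_neg] at h1
  exact h1

lemma coeff_of_hyperplane (hd : 2 ≤ d) {α : ℝ} {β : E d} {γ : ℝ} {β₀ : E d} {γ₀ : ℝ}
    (hβ₀ : β₀ ≠ 0) (h : solC' d α β γ = solC' d 0 β₀ γ₀) (hnd : α ≠ 0 ∨ β ≠ 0) :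
    ∃ t : ℝ, t ≠ 0 ∧ α = 0 ∧ β = t • β₀ ∧ γ = t * γ₀ := by
  set x₀ : E d := (-(γ₀ / ‖β₀‖^2)) • β₀ with hx₀
  have hix : ⟪β₀, x₀⟫ = -γ₀ := base_point_mem d γ₀ hβ₀
  have hmem : ∀ v : E d, ⟪β₀, v⟫ = 0 → α * ‖x₀ + v‖^2 + ⟪β, x₀ + v⟫ + γ = 0 := by
    intro v hv
    have : x₀ + v ∈ solC' d α β γ := by
      rw [h]
      simp only [solC', Set.mem_setOf_eq, inner_add_right, hix, hv]; ring
    exact this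
  have E0 : α * ‖x₀‖^2 + ⟪β, x₀⟫ + γ = 0 := by
    have h0 := hmem 0 (by rw [inner_zero_right])
    rw [add_zero] at h0; exact h0
  rcases exists_orth d hd β₀ hβ₀ with ⟨w, hw0, hwo⟩
  have Ep := hmem w hwo
  have Em := hmem (-w) (by rw [inner_neg_right, hwo]; ring)
  rw [show x₀ + -w = x₀ - w by abel] at Em
  rw [norm_add_sq_real, inner_add_right] at Ep
  rw [norm_sub_sq_real, inner_sub_right] at Em
  have hα : α = 0 := by
    have hw2 : α * ‖w‖^2 = 0 := by linear_combination (Ep + Em)/2 - E0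
    have hwn : ‖w‖ ≠ 0 := by simpa using hw0
    rcases mul_eq_zero.1 hw2 with h' | h'
    · exact h'
    · exact absurd (by simpa using pow_eq_zero_iff (n:=2) (by norm_num) |>.1 h') hwn
  subst hα
  have hβ : β ≠ 0 := hnd.resolve_left (by simp)
  have hBmem : β ∈ (ℝ ∙ β₀) := by
    rw [← Submodule.orthogonal_orthogonal (ℝ ∙ β₀), Submodule.mem_orthogonal]
    intro v hv
    have hv' : ⟪β₀, v⟫ = 0 := Submodule.mem_orthogonal_singleton_iff_inner_right.1 hv
    have hEv := hmem v hv'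
    rw [inner_add_right] at hEv
    have : ⟪β, v⟫ = 0 := by nlinarith [E0, hEv]
    rw [real_inner_comm]; exact this
  rcases Submodule.mem_span_singleton.1 hBmem with ⟨t, ht⟩
  have ht0 : t ≠ 0 := by rintro rfl; rw [← ht] at hβ; simp at hβ
  refine ⟨t, ht0, rfl, ht.symm, ?_⟩
  have hti : ⟪β, x₀⟫ = t * ⟪β₀, x₀⟫ := by rw [← ht, real_inner_smul_left]
  rw [hix] at hti
  nlinarith [E0, hti]

lemma isHypersphere_solC' {α : ℝ} {β : E d} {γ : ℝ} (hnd : α ≠ 0 ∨ β ≠ 0)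
    {x₁ x₂ : E d} (h1 : x₁ ∈ solC' d α β γ) (h2 : x₂ ∈ solC' d α β γ) (hne : x₁ ≠ x₂) :
    IsHypersphere d (solC' d α β γ) := by
  rcases eq_or_ne α 0 with rfl | hα
  · exact Or.inr (canonical_hyperplane d γ (hnd.resolve_left (by simp)))
  · set c : E d := (-(2*α)⁻¹) • β with hc
    have key : ∀ x : E d, x ∈ solC' d α β γ ↔ ‖x - c‖^2 = ‖c‖^2 - γ/α := by
      intro x
      have hid : ‖x - c‖^2 - (‖c‖^2 - γ/α) = (α*‖x‖^2 + ⟪β,x⟫ + γ)/α := by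
        rw [norm_sub_sq_real, hc, real_inner_smul_right, real_inner_comm β x]
        field_simp
        ring
      constructor
      · intro hx
        have hx' : α*‖x‖^2 + ⟪β,x⟫ + γ = 0 := hx
        rw [hx'] at hid
        simp only [zero_div] at hid
        linarith
      · intro hx
        show α*‖x‖^2 + ⟪β,x⟫ + γ = 0
        have hz : (α*‖x‖^2 + ⟪β,x⟫ + γ)/α = 0 := by rw [← hid]; linarith
        rcases div_eq_zero_iff.1 hz with h' | h'
        · exact h'
        · exact absurd h' hα
    have hR1 : ‖x₁ - c‖^2 = ‖c‖^2 - γ/α := (key x₁).1 h1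
    have hR2 : ‖x₂ - c‖^2 = ‖c‖^2 - γ/α := (key x₂).1 h2
    have hRpos : 0 < ‖c‖^2 - γ/α := by
      rcases lt_or_eq_of_le (by rw [← hR1]; positivity : (0:ℝ) ≤ ‖c‖^2 - γ/α) with h' | h'
      · exact h'
      · exfalso
        have e1 : ‖x₁ - c‖ = 0 := by
          have : ‖x₁ - c‖^2 = 0 := by rw [hR1, ← h']
          simpa using pow_eq_zero_iff (n:=2) (by norm_num) |>.1 this
        have e2 : ‖x₂ - c‖ = 0 := by
          have : ‖x₂ - c‖^2 = 0 := by rw [hR2, ← h']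
          simpa using pow_eq_zero_iff (n:=2) (by norm_num) |>.1 this
        rw [norm_eq_zero, sub_eq_zero] at e1 e2
        exact hne (e1.trans e2.symm)
    refine Or.inl ⟨c, Real.sqrt (‖c‖^2 - γ/α), Real.sqrt_pos.2 hRpos, ?_⟩
    ext x
    rw [mem_sphere_iff_norm, key x]
    constructor
    · intro hx
      rw [← hx]
      exact (Real.sqrt_sq (norm_nonneg _)).symm
    · intro hx
      rw [hx, Real.sq_sqrt hRpos.le]

lemma sol_eq_proportional (hd : 2 ≤ d) {α α' : ℝ} {β β' : E d} {γ γ' : ℝ}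
    (hnd : α ≠ 0 ∨ β ≠ 0) (hnd' : α' ≠ 0 ∨ β' ≠ 0)
    (hsol : solC' d α β γ = solC' d α' β' γ')
    {x₁ x₂ : E d} (h1 : x₁ ∈ solC' d α β γ) (h2 : x₂ ∈ solC' d α β γ) (hne : x₁ ≠ x₂) :
    ∃ t : ℝ, t ≠ 0 ∧ α' = t * α ∧ β' = t • β ∧ γ' = t * γ := by
  rcases isHypersphere_solC' d hnd h1 h2 hne with ⟨c, r, hr, hS⟩ | hS
  · obtain ⟨hα, hβ, hγ⟩ := coeff_of_sphere d hd hr hS hnd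
    obtain ⟨hα', hβ', hγ'⟩ := coeff_of_sphere d hd hr (hsol.symm.trans hS) hnd'
    refine ⟨α'/α, div_ne_zero hα' hα, by field_simp, ?_, ?_⟩
    · rw [hβ', hβ, smul_smul]
      congr 1
      field_simp
    · rw [hγ', hγ]
      field_simp
  · obtain ⟨β₀, γ₀, hβ₀, hcan⟩ := hyperplane_canonical d (by omega) hS
    obtain ⟨t₁, ht₁, hα1, hβ1, hγ1⟩ := coeff_of_hyperplane d hd hβ₀ hcan hnd
    obtain ⟨t₂, ht₂, hα2, hβ2, hγ2⟩ := coeff_of_hyperplane d hd hβ₀ (hsol.symm.trans hcan) hnd'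
    refine ⟨t₂/t₁, div_ne_zero ht₂ ht₁, by rw [hα1, hα2]; ring, ?_, ?_⟩
    · rw [hβ1, hβ2, smul_smul]
      congr 1
      field_simp
    · rw [hγ1, hγ2]
      field_simp


lemma solC_eq (u : W d) :
    solC d u = solC' d (alphaC d u) (betaC d u) (gammaC d u) := rfl

lemma vec_eq_zero_iff {m : ℕ} (v : EuclideanSpace ℝ (Fin m)) : v = 0 ↔ ∀ j, v j = 0 :=
  ⟨fun h j => by rw [h]; rfl, fun h => by ext j; exact h j⟩

lemma sum_smul_apply {n m : ℕ} (w : Fin n → ℝ) (v : Fin n → EuclideanSpace ℝ (Fin m))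
    (j : Fin m) : (∑ i, w i • v i) j = ∑ i, w i * v i j := by
  have h2 : (∑ i, w i • v i) j = EuclideanSpace.projₗ (𝕜 := ℝ) j (∑ i, w i • v i) := rfl
  rw [h2, map_sum]
  simp [EuclideanSpace.projₗ]

lemma liftP_castSucc (x : E d) (j : Fin (d+1)) :
    liftP d x j.castSucc = (‖x‖^2 + 1) * invStereo d x j := by
  have hpos : ‖x‖^2 + 1 ≠ 0 := by positivity
  have hiv : invStereo d x j = if h : (j : ℕ) < d then 2 * x ⟨j, h⟩ / (‖x‖^2+1)
      else (‖x‖^2 - 1)/(‖x‖^2+1) := rfl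
  have hc : ((j.castSucc : Fin (d+2)) : ℕ) = (j : ℕ) := rfl
  rcases lt_or_ge (j : ℕ) d with h | h
  · rw [liftP, PiLp.toLp_apply]
    rw [dif_pos (show ((j.castSucc : Fin (d+2)) : ℕ) < d from h)]
    rw [hiv, dif_pos h]
    have he : (⟨((j.castSucc : Fin (d+2)) : ℕ), h⟩ : Fin d) = ⟨(j : ℕ), h⟩ := rfl
    rw [he]
    field_simp
  · have hj : (j : ℕ) = d := by omega
    rw [liftP, PiLp.toLp_apply, dif_neg (by rw [hc]; omega), if_pos (by rw [hc]; exact hj)]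
    rw [hiv, dif_neg (by omega)]
    field_simp

lemma liftP_last' (x : E d) : liftP d x (Fin.last (d+1)) = ‖x‖^2 + 1 := by
  rw [liftP, PiLp.toLp_apply]
  have h1 : ¬ ((Fin.last (d+1) : ℕ) < d) := by simp [Fin.last]
  rw [dif_neg h1]
  have h2 : ¬ ((Fin.last (d+1) : ℕ) = d) := by simp [Fin.last]
  rw [if_neg h2]

lemma sum_smul_liftP_eq_zero_iff (p : Fin (d+1) → E d) (w : Fin (d+1) → ℝ) :
    (∑ i, w i • liftP d (p i)) = 0 ↔
      ((∑ i, w i * (‖p i‖^2+1)) = 0 ∧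
        (∑ i, (w i * (‖p i‖^2+1)) • invStereo d (p i)) = 0) := by
  constructor
  · intro h
    have hcomp : ∀ j : Fin (d+2), ∑ i, w i * liftP d (p i) j = 0 := by
      intro j
      rw [← sum_smul_apply, h]
      rfl
    constructor
    · have hl := hcomp (Fin.last (d+1))
      simpa only [liftP_last'] using hl
    · apply (vec_eq_zero_iff _).2
      intro j
      rw [sum_smul_apply]
      have hj := hcomp j.castSucc
      simp only [liftP_castSucc] at hj
      simp only [mul_assoc]
      exact hj
  · rintro ⟨h1, h2⟩
    apply (vec_eq_zero_iff _).2
    intro j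
    rw [sum_smul_apply]
    by_cases h : (j : ℕ) < d + 1
    · have hj : j = Fin.castSucc ⟨(j : ℕ), h⟩ := by ext; rfl
      rw [hj]
      simp only [liftP_castSucc]
      have h3 := (vec_eq_zero_iff _).1 h2 ⟨(j : ℕ), h⟩
      rw [sum_smul_apply] at h3
      simp only [mul_assoc] at h3
      exact h3
    · have hj : j = Fin.last (d+1) := by
        ext
        simp only [Fin.last]
        omega
      rw [hj]
      simp only [liftP_last']
      exact h1

lemma dep_iff (p : Fin (d+1) → E d) :
    (¬ AffineIndependent ℝ (fun i => invStereo d (p i))) ↔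
    ¬ LinearIndependent ℝ (fun i => liftP d (p i)) := by
  rw [affineIndependent_iff_of_fintype, Fintype.not_linearIndependent_iff]
  push_neg
  constructor
  · rintro ⟨w, hw0, hwv, i₀, hi₀⟩
    rw [Finset.weightedVSub_eq_linear_combination _ hw0] at hwv
    have hs : ∀ i, w i / (‖p i‖^2+1) * (‖p i‖^2+1) = w i := by
      intro i
      have : ‖p i‖^2 + 1 ≠ 0 := by positivity
      field_simp
    refine ⟨fun i => w i / (‖p i‖^2 + 1), ?_, i₀, ?_⟩
    · apply (sum_smul_liftP_eq_zero_iff d p _).2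
      constructor
      · simp only [hs]; exact hw0
      · simp only [hs]; exact hwv
    · have : ‖p i₀‖^2 + 1 ≠ 0 := by positivity
      exact div_ne_zero hi₀ this
  · rintro ⟨g, hg, i₀, hi₀⟩
    obtain ⟨h1, h2⟩ := (sum_smul_liftP_eq_zero_iff d p g).1 hg
    refine ⟨fun i => g i * (‖p i‖^2 + 1), h1, ?_, i₀, ?_⟩
    · rw [Finset.weightedVSub_eq_linear_combination _ h1]
      exact h2
    · have : ‖p i₀‖^2 + 1 ≠ 0 := by positivity
      exact mul_ne_zero hi₀ this

lemma hypersphere_canonical (hd : 1 ≤ d) {S : Set (E d)} (h : IsHypersphere d S) :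
    ∃ (α : ℝ) (β : E d) (γ : ℝ), (α ≠ 0 ∨ β ≠ 0) ∧ S = solC' d α β γ := by
  rcases h with ⟨c, r, hr, rfl⟩ | h
  · exact ⟨1, -(2:ℝ) • c, ‖c‖^2 - r^2, Or.inl one_ne_zero, sphere_canonical d hr⟩
  · obtain ⟨β₀, γ₀, hβ₀, hS⟩ := hyperplane_canonical d hd h
    exact ⟨0, β₀, γ₀, Or.inr hβ₀, hS⟩

lemma alphaC_zero : alphaC d (0 : W d) = 0 := by simp [alphaC]
lemma betaC_zero : betaC d (0 : W d) = 0 := by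
  ext i
  simp [betaC]

lemma nondeg_of_sol_mem {u : W d} (x : E d) (hx : x ∈ solC d u) (hu : u ≠ 0) :
    alphaC d u ≠ 0 ∨ betaC d u ≠ 0 := by
  by_contra hcon
  push_neg at hcon
  apply hu
  apply coeff_zero d u hcon.1 hcon.2
  have h5 : alphaC d u * ‖x‖^2 + ⟪betaC d u, x⟫ + gammaC d u = 0 := hx
  rw [hcon.1, hcon.2, inner_zero_left] at h5
  linarith

end TwoHS
end
end TwoHSAux

/-- `d+1` distinct points of `ℝ^d` lie on two distinct generalized
hyperspheres iff their inverse stereographic images are affinely dependent. -/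
theorem two_hyperspheres_iff_affineDependent
    (d : ℕ) (hd : 2 ≤ d) (p : Fin (d + 1) → EuclideanSpace ℝ (Fin d))
    (hp : Function.Injective p) :
    (∃ S₁ S₂ : Set (EuclideanSpace ℝ (Fin d)), IsHypersphere d S₁ ∧ IsHypersphere d S₂ ∧
      S₁ ≠ S₂ ∧ (∀ i, p i ∈ S₁) ∧ (∀ i, p i ∈ S₂)) ↔
    ¬ AffineIndependent ℝ (fun i => invStereo d (p i)) := by
  classical
  rw [TwoHS.dep_iff d p]
  set i₀ : Fin (d+1) := ⟨0, by omega⟩ with hi₀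
  set i₁ : Fin (d+1) := ⟨1, by omega⟩ with hi₁
  have hpne : p i₀ ≠ p i₁ := by
    intro h
    have h' := hp h
    rw [hi₀, hi₁, Fin.ext_iff] at h'
    simp at h'
  have hfr := Submodule.finrank_add_finrank_orthogonal
    (𝕜 := ℝ) (K := Submodule.span ℝ (Set.range (fun i => TwoHS.liftP d (p i))))
  rw [finrank_euclideanSpace_fin] at hfr
  set K := Submodule.span ℝ (Set.range (fun i => TwoHS.liftP d (p i))) with hK
  have mem_orth : ∀ u : TwoHS.W d, u ∈ Kᗮ ↔
      ∀ i, (inner ℝ (TwoHS.liftP d (p i)) u : ℝ) = 0 := by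
    intro u
    constructor
    · intro hu i
      exact (Submodule.mem_orthogonal K u).1 hu _ (Submodule.subset_span ⟨i, rfl⟩)
    · intro h
      rw [Submodule.mem_orthogonal]
      intro v hv
      induction hv using Submodule.span_induction with
      | mem x hx => obtain ⟨i, rfl⟩ := hx; exact h i
      | zero => exact inner_zero_left u
      | add x y hx hy ihx ihy => rw [inner_add_left, ihx, ihy, add_zero]
      | smul a x hx ih => rw [real_inner_smul_left, ih, mul_zero]
  constructor
  · rintro ⟨S₁, S₂, hS₁, hS₂, hSne, hm₁, hm₂⟩
    obtain ⟨α₁, β₁, γ₁, hnd₁, rfl⟩ := TwoHS.hypersphere_canonical d (by omega) hS₁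
    obtain ⟨α₂, β₂, γ₂, hnd₂, rfl⟩ := TwoHS.hypersphere_canonical d (by omega) hS₂
    obtain ⟨u₁, ha₁, hb₁, hc₁⟩ := TwoHS.exists_coeff d α₁ β₁ γ₁
    obtain ⟨u₂, ha₂, hb₂, hc₂⟩ := TwoHS.exists_coeff d α₂ β₂ γ₂
    have hsol₁ : TwoHS.solC d u₁ = TwoHS.solC' d α₁ β₁ γ₁ := by
      rw [TwoHS.solC_eq, ha₁, hb₁, hc₁]
    have hsol₂ : TwoHS.solC d u₂ = TwoHS.solC' d α₂ β₂ γ₂ := by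
      rw [TwoHS.solC_eq, ha₂, hb₂, hc₂]
    have hE₁ : ∀ i, (inner ℝ (TwoHS.liftP d (p i)) u₁ : ℝ) = 0 := by
      intro i
      rw [TwoHS.inner_liftP, ha₁, hb₁, hc₁]
      exact hm₁ i
    have hE₂ : ∀ i, (inner ℝ (TwoHS.liftP d (p i)) u₂ : ℝ) = 0 := by
      intro i
      rw [TwoHS.inner_liftP, ha₂, hb₂, hc₂]
      exact hm₂ i
    have hu₁0 : u₁ ≠ 0 := by
      rintro rfl
      rw [TwoHS.alphaC_zero] at ha₁
      rw [TwoHS.betaC_zero] at hb₁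
      rcases hnd₁ with h | h
      · exact h ha₁.symm
      · exact h hb₁.symm
    have hu₂0 : u₂ ≠ 0 := by
      rintro rfl
      rw [TwoHS.alphaC_zero] at ha₂
      rw [TwoHS.betaC_zero] at hb₂
      rcases hnd₂ with h | h
      · exact h ha₂.symm
      · exact h hb₂.symm
    have hprop : ∀ c : ℝ, c ≠ 0 → u₂ ≠ c • u₁ := by
      intro c hc he
      apply hSne
      rw [← hsol₁, ← hsol₂, he, TwoHS.solC_smul d hc]
    have hpair : LinearIndependent ℝ ![u₁, u₂] := by
      rw [LinearIndependent.pair_iff]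
      intro s t hst
      by_cases ht : t = 0
      · subst ht
        rw [zero_smul, add_zero] at hst
        exact ⟨(smul_eq_zero.1 hst).resolve_right hu₁0, rfl⟩
      · exfalso
        have h1 : t • u₂ = (-s) • u₁ :=
          (eq_neg_of_add_eq_zero_right hst).trans (neg_smul s u₁).symm
        have he : u₂ = (-(s/t)) • u₁ := by
          calc u₂ = t⁻¹ • (t • u₂) := by rw [smul_smul, inv_mul_cancel₀ ht, one_smul]
            _ = t⁻¹ • ((-s) • u₁) := by rw [h1]
            _ = (-(s/t)) • u₁ := by rw [smul_smul]; congr 1; field_simp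
        by_cases hs : s = 0
        · subst hs
          simp at he
          exact hu₂0 he
        · exact hprop _ (neg_ne_zero.2 (div_ne_zero hs ht)) he
    have hmem₁ : u₁ ∈ Kᗮ := (mem_orth u₁).2 hE₁
    have hmem₂ : u₂ ∈ Kᗮ := (mem_orth u₂).2 hE₂
    have hsub : LinearIndependent ℝ
        (fun j : Fin 2 => (![(⟨u₁, hmem₁⟩ : Kᗮ), ⟨u₂, hmem₂⟩] j)) := by
      apply LinearIndependent.of_comp (Kᗮ.subtype)
      have hcomp : Kᗮ.subtype ∘ (fun j : Fin 2 =>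
          (![(⟨u₁, hmem₁⟩ : Kᗮ), ⟨u₂, hmem₂⟩] j)) = ![u₁, u₂] := by
        funext j
        fin_cases j <;> rfl
      rw [hcomp]
      exact hpair
    have hcard := LinearIndependent.fintype_card_le_finrank hsub
    rw [Fintype.card_fin] at hcard
    intro hLI
    have hsp := finrank_span_eq_card hLI
    rw [← hK, Fintype.card_fin] at hsp
    omega
  · intro hdep
    have hub : Module.finrank ℝ K ≤ d + 1 := by
      have h1 := finrank_span_le_card (R := ℝ) (Set.range (fun i => TwoHS.liftP d (p i)))
      rw [← hK] at h1
      refine le_trans h1 ?_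
      rw [Set.toFinset_range]
      exact le_trans Finset.card_image_le (by simp)
    have hne' : Module.finrank ℝ K ≠ d + 1 := by
      intro h
      apply hdep
      rw [linearIndependent_iff_card_eq_finrank_span, Fintype.card_fin]
      show d + 1 = Module.finrank ℝ
        ↥(Submodule.span ℝ (Set.range (fun i => TwoHS.liftP d (p i))))
      rw [← hK, h]
    have h2K : 2 ≤ Module.finrank ℝ ↥Kᗮ := by omega
    set b := Module.finBasis ℝ ↥Kᗮ with hb
    set e : Fin 2 → Fin (Module.finrank ℝ ↥Kᗮ) := fun j => ⟨(j : ℕ), by omega⟩ with he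
    have hinj : Function.Injective e := by
      intro a b' hab
      rw [he] at hab
      have := congrArg Fin.val hab
      exact Fin.ext this
    set v : Fin 2 → TwoHS.W d := fun j => ((b (e j) : ↥Kᗮ) : TwoHS.W d) with hv
    have hbi : LinearIndependent ℝ v := by
      rw [hv]
      exact (b.linearIndependent.comp e hinj).map' Kᗮ.subtype (Submodule.ker_subtype _)
    have hmemv : ∀ j : Fin 2, v j ∈ Kᗮ := fun j => (b (e j)).2
    have hsol : ∀ j : Fin 2, ∀ i, p i ∈ TwoHS.solC d (v j) := by
      intro j i
      have h4 := (mem_orth (v j)).1 (hmemv j) i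
      rw [TwoHS.inner_liftP] at h4
      exact h4
    have hne0 : ∀ j : Fin 2, v j ≠ 0 := fun j => hbi.ne_zero j
    have hnd : ∀ j : Fin 2, TwoHS.alphaC d (v j) ≠ 0 ∨ TwoHS.betaC d (v j) ≠ 0 :=
      fun j => TwoHS.nondeg_of_sol_mem d (p i₀) (hsol j i₀) (hne0 j)
    have hdist : TwoHS.solC d (v 0) ≠ TwoHS.solC d (v 1) := by
      intro heq
      rw [TwoHS.solC_eq, TwoHS.solC_eq] at heq
      obtain ⟨t, ht, hta, htb, htg⟩ := TwoHS.sol_eq_proportional d hd (hnd 0) (hnd 1)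
        heq (hsol 0 i₀) (hsol 0 i₁) hpne
      have hu2t : v 1 = t • v 0 := by
        have hz : v 1 - t • v 0 = 0 := by
          apply TwoHS.coeff_zero
          · rw [TwoHS.alphaC_sub, TwoHS.alphaC_smul, hta]; ring
          · rw [TwoHS.betaC_sub, TwoHS.betaC_smul, htb, sub_self]
          · rw [TwoHS.gammaC_sub, TwoHS.gammaC_smul, htg]; ring
        exact sub_eq_zero.1 hz
      have hnli : ¬ LinearIndependent ℝ v := by
        apply Fintype.not_linearIndependent_iff.2
        refine ⟨![t, -1], ?_, ⟨1, by norm_num⟩⟩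
        rw [Fin.sum_univ_two]
        show t • v 0 + (-1 : ℝ) • v 1 = 0
        rw [hu2t, neg_smul, one_smul]
        simp
      exact hnli hbi
    refine ⟨TwoHS.solC d (v 0), TwoHS.solC d (v 1), ?_, ?_, hdist, hsol 0, hsol 1⟩
    · rw [TwoHS.solC_eq]
      exact TwoHS.isHypersphere_solC' d (hnd 0) (hsol 0 i₀) (hsol 0 i₁) hpne
    · rw [TwoHS.solC_eq]
      exact TwoHS.isHypersphere_solC' d (hnd 1) (hsol 1 i₀) (hsol 1 i₁) hpne
end

section
/- Let d ≥ 2 and let H be an affine hyperplane of ℝ^{d+1} such that H ∩ S^d contains at least two points. If N ∉ H, then π(H ∩ S^d) is a metric sphere of positive radius in ℝ^d; if N ∈ H, then π((H ∩ S^d) \ {N}) is an affine hyperplane of ℝ^d. Conversely, for every generalized hypersphere V of ℝ^d there is a unique affine hyperplane H of ℝ^{d+1} such that π⁻¹(V) = (H ∩ S^d) \ {N}. -/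
variable {d : ℕ}

lemma invStereo_castSucc (x : EuclideanSpace ℝ (Fin d)) (i : Fin d) :
    invStereo d x i.castSucc = 2 * x i / (‖x‖ ^ 2 + 1) := by
  simp [invStereo, EuclideanSpace.equiv, Fin.castSucc, Fin.is_lt]

lemma invStereo_last (x : EuclideanSpace ℝ (Fin d)) :
    invStereo d x (Fin.last d) = (‖x‖ ^ 2 - 1) / (‖x‖ ^ 2 + 1) := by
  simp [invStereo, EuclideanSpace.equiv, Fin.last]

lemma stereo_apply (q : EuclideanSpace ℝ (Fin (d+1))) (i : Fin d) :
    stereo d q i = q i.castSucc / (1 - q (Fin.last d)) := rfl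

lemma normsq (x : EuclideanSpace ℝ (Fin d)) : ‖x‖ ^ 2 = ∑ i, x i * x i := by
  rw [← real_inner_self_eq_norm_sq]
  simp only [PiLp.inner_apply, RCLike.inner_apply, conj_trivial]

lemma den_pos (x : EuclideanSpace ℝ (Fin d)) : 0 < ‖x‖ ^ 2 + 1 := by positivity

lemma norm_invStereo (x : EuclideanSpace ℝ (Fin d)) : ‖invStereo d x‖ = 1 := by
  have h : ‖invStereo d x‖ ^ 2 = 1 := by
    rw [normsq, Fin.sum_univ_castSucc]
    simp only [invStereo_castSucc, invStereo_last]
    have hS : ∑ i : Fin d, (2 * x i / (‖x‖ ^ 2 + 1)) * (2 * x i / (‖x‖ ^ 2 + 1))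
        = 4 * (‖x‖^2) / (‖x‖^2+1)^2 := by
      have e : ∀ i : Fin d, (2 * x i / (‖x‖ ^ 2 + 1)) * (2 * x i / (‖x‖ ^ 2 + 1))
          = 4 * (x i * x i) / (‖x‖^2+1)^2 := fun i => by
        rw [div_mul_div_comm, ← pow_two (‖x‖^2+1)]
        congr 1
        ring
      rw [Finset.sum_congr rfl (fun i _ => e i), ← Finset.sum_div, ← Finset.mul_sum, ← normsq]
    rw [hS]
    have hD := den_pos x
    field_simp
    ring
  nlinarith [norm_nonneg (invStereo d x), h]

lemma invStereo_last_ne_one (x : EuclideanSpace ℝ (Fin d)) :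
    invStereo d x (Fin.last d) ≠ 1 := by
  rw [invStereo_last]
  have hD := den_pos x
  intro h
  rw [div_eq_one_iff_eq (ne_of_gt hD)] at h
  linarith

lemma northPole_last : northPole d (Fin.last d) = 1 := by
  simp [northPole]

lemma invStereo_ne_northPole (x : EuclideanSpace ℝ (Fin d)) :
    invStereo d x ≠ northPole d := fun h => invStereo_last_ne_one x (by rw [h, northPole_last])

lemma stereo_invStereo (x : EuclideanSpace ℝ (Fin d)) : stereo d (invStereo d x) = x := by
  ext i
  rw [stereo_apply, invStereo_castSucc, invStereo_last]
  have hD := den_pos x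
  have h1 : 1 - (‖x‖ ^ 2 - 1) / (‖x‖ ^ 2 + 1) = 2 / (‖x‖^2+1) := by
    field_simp
    norm_num
  rw [h1]
  field_simp

lemma invStereo_inj : Function.Injective (invStereo d) := by
  intro x y h
  have := congrArg (stereo d) h
  rwa [stereo_invStereo, stereo_invStereo] at this

lemma mem_unit_sphere_iff (q : EuclideanSpace ℝ (Fin (d+1))) :
    q ∈ Metric.sphere (0 : EuclideanSpace ℝ (Fin (d+1))) 1 ↔ ‖q‖ = 1 := by
  simp [mem_sphere_iff_norm]

lemma northPole_castSucc (i : Fin d) : northPole d i.castSucc = 0 := by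
  simp [northPole, EuclideanSpace.single_apply]

lemma eq_northPole_of_last_eq_one (q : EuclideanSpace ℝ (Fin (d+1)))
    (hq : ‖q‖ = 1) (hl : q (Fin.last d) = 1) : q = northPole d := by
  have h2 : ‖q‖ ^ 2 = 1 := by rw [hq]; norm_num
  rw [normsq, Fin.sum_univ_castSucc, hl] at h2
  have hz : ∑ i : Fin d, q i.castSucc * q i.castSucc = 0 := by linarith
  have hall : ∀ i : Fin d, q i.castSucc * q i.castSucc = 0 := by
    intro i
    have := Finset.sum_eq_zero_iff_of_nonneg (fun i _ => mul_self_nonneg (q i.castSucc)) |>.mp hz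
    exact this i (Finset.mem_univ i)
  ext j
  refine Fin.lastCases ?_ ?_ j
  · rw [hl, northPole_last]
  · intro i
    rw [northPole_castSucc]
    exact mul_self_eq_zero.mp (hall i)

lemma invStereo_stereo (q : EuclideanSpace ℝ (Fin (d+1))) (hq : ‖q‖ = 1)
    (hl : q (Fin.last d) ≠ 1) : invStereo d (stereo d q) = q := by
  set s := q (Fin.last d) with hs
  have hs1 : 1 - s ≠ 0 := fun h => hl (by linarith [sub_eq_zero.mp h])
  have hynorm : ‖stereo d q‖ ^ 2 = (1 + s) / (1 - s) := by
    rw [normsq]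
    have e : ∀ i : Fin d, stereo d q i * stereo d q i
        = (q i.castSucc * q i.castSucc) / (1-s)^2 := fun i => by
      rw [stereo_apply, div_mul_div_comm, ← pow_two (1-s)]
    rw [Finset.sum_congr rfl (fun i _ => e i), ← Finset.sum_div]
    have hsum : ∑ i : Fin d, q i.castSucc * q i.castSucc = 1 - s * s := by
      have h2 : ‖q‖ ^ 2 = 1 := by rw [hq]; norm_num
      rw [normsq, Fin.sum_univ_castSucc] at h2
      linarith
    rw [hsum]
    have : 1 - s * s = (1 - s) * (1 + s) := by ring
    rw [this, pow_two]
    rw [mul_div_mul_left _ _ hs1]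
  have hp : ‖stereo d q‖ ^ 2 + 1 = 2 / (1 - s) := by
    rw [hynorm]; field_simp; norm_num
  have hm : ‖stereo d q‖ ^ 2 - 1 = 2 * s / (1 - s) := by
    rw [hynorm]; field_simp; ring
  ext j
  refine Fin.lastCases ?_ ?_ j
  · rw [invStereo_last, hp, hm, div_div_div_cancel_right₀ hs1]
    rw [mul_comm, mul_div_assoc, div_self (by norm_num : (2:ℝ) ≠ 0), mul_one]
  · intro i
    rw [invStereo_castSucc, hp, stereo_apply, mul_div_assoc,
      div_div_div_cancel_right₀ hs1]
    rw [mul_comm, div_mul_cancel₀ _ (by norm_num : (2:ℝ) ≠ 0)]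

noncomputable def headPart (a : EuclideanSpace ℝ (Fin (d+1))) : EuclideanSpace ℝ (Fin d) :=
  (EuclideanSpace.equiv (Fin d) ℝ).symm fun i => a i.castSucc

lemma headPart_apply (a : EuclideanSpace ℝ (Fin (d+1))) (i : Fin d) :
    headPart a i = a i.castSucc := rfl

lemma inner_euclid (a x : EuclideanSpace ℝ (Fin d)) :
    (inner ℝ a x : ℝ) = ∑ i, a i * x i := by
  simp [PiLp.inner_apply, mul_comm]

lemma inner_invStereo (a : EuclideanSpace ℝ (Fin (d+1))) (x : EuclideanSpace ℝ (Fin d)) :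
    (inner ℝ a (invStereo d x) : ℝ) =
      (2 * (inner ℝ (headPart a) x : ℝ) + a (Fin.last d) * (‖x‖ ^ 2 - 1)) / (‖x‖ ^ 2 + 1) := by
  rw [inner_euclid, inner_euclid, Fin.sum_univ_castSucc]
  simp only [invStereo_castSucc, invStereo_last, headPart_apply]
  rw [add_div]
  congr 1
  · rw [Finset.mul_sum, Finset.sum_div]
    apply Finset.sum_congr rfl
    intro i _
    ring
  · rw [mul_div_assoc]

/-- membership of `invStereo x` in the affine hyperplane `⟪a,·⟫ = b` as a quadratic
condition on `x`. -/
lemma quad_iff (a : EuclideanSpace ℝ (Fin (d+1))) (b : ℝ) (x : EuclideanSpace ℝ (Fin d)) :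
    (inner ℝ a (invStereo d x) : ℝ) = b ↔
      (a (Fin.last d) - b) * ‖x‖ ^ 2 + 2 * (inner ℝ (headPart a) x : ℝ)
        - (a (Fin.last d) + b) = 0 := by
  rw [inner_invStereo, div_eq_iff (den_pos x).ne']
  constructor <;> intro h <;> nlinarith [h]

lemma stereo_image (A : Set (EuclideanSpace ℝ (Fin (d+1))))
    (hA : ∀ q ∈ A, ‖q‖ = 1 ∧ q (Fin.last d) ≠ 1) :
    stereo d '' A = {x | invStereo d x ∈ A} := by
  ext x
  constructor
  · rintro ⟨q, hq, rfl⟩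
    obtain ⟨h1, h2⟩ := hA q hq
    simpa [invStereo_stereo q h1 h2] using hq
  · intro hx
    exact ⟨invStereo d x, hx, stereo_invStereo x⟩

lemma invStereo_image (V : Set (EuclideanSpace ℝ (Fin d)))
    (H : Set (EuclideanSpace ℝ (Fin (d+1))))
    (h : ∀ x, x ∈ V ↔ invStereo d x ∈ H) :
    invStereo d '' V =
      (H ∩ Metric.sphere (0 : EuclideanSpace ℝ (Fin (d+1))) 1) \ {northPole d} := by
  ext q
  constructor
  · rintro ⟨x, hx, rfl⟩
    exact ⟨⟨(h x).mp hx, (mem_unit_sphere_iff _).mpr (norm_invStereo x)⟩,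
      invStereo_ne_northPole x⟩
  · rintro ⟨⟨hH, hS⟩, hN⟩
    have hq : ‖q‖ = 1 := (mem_unit_sphere_iff _).mp hS
    have hl : q (Fin.last d) ≠ 1 := fun hl => hN (eq_northPole_of_last_eq_one q hq hl)
    have he : invStereo d (stereo d q) = q := invStereo_stereo q hq hl
    exact ⟨stereo d q, (h _).mpr (by rw [he]; exact hH), he⟩

lemma invStereo_image_rev (V : Set (EuclideanSpace ℝ (Fin d)))
    (H : Set (EuclideanSpace ℝ (Fin (d+1))))
    (h : invStereo d '' V =
      (H ∩ Metric.sphere (0 : EuclideanSpace ℝ (Fin (d+1))) 1) \ {northPole d}) :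
    ∀ x, x ∈ V ↔ invStereo d x ∈ H := by
  intro x
  constructor
  · intro hx
    have : invStereo d x ∈ invStereo d '' V := ⟨x, hx, rfl⟩
    rw [h] at this
    exact this.1.1
  · intro hx
    have : invStereo d x ∈ (H ∩ Metric.sphere (0:EuclideanSpace ℝ (Fin (d+1))) 1) \ {northPole d} :=
      ⟨⟨hx, (mem_unit_sphere_iff _).mpr (norm_invStereo x)⟩, invStereo_ne_northPole x⟩
    rw [← h] at this
    obtain ⟨y, hy, hyx⟩ := this
    rwa [← invStereo_inj hyx]

lemma hyperplane_of_inner {m : ℕ} (a : EuclideanSpace ℝ (Fin m)) (ha : a ≠ 0) (b : ℝ) :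
    IsAffineHyperplane m {x | (inner ℝ a x : ℝ) = b} := by
  have hna : ‖a‖ ^ 2 ≠ 0 := pow_ne_zero 2 (norm_ne_zero_iff.mpr ha)
  have hKd : Module.finrank ℝ ((Submodule.span ℝ {a})ᗮ) = m - 1 := by
    have h1 := Submodule.finrank_add_finrank_orthogonal (Submodule.span ℝ {a})
    rw [finrank_span_singleton ha, finrank_euclideanSpace_fin] at h1
    omega
  set x₀ : EuclideanSpace ℝ (Fin m) := (b / ‖a‖ ^ 2) • a with hx₀
  clear_value x₀
  have hax₀ : (inner ℝ a x₀ : ℝ) = b := by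
    rw [hx₀, real_inner_smul_right, real_inner_self_eq_norm_sq]
    field_simp
  refine ⟨AffineSubspace.mk' x₀ ((Submodule.span ℝ {a})ᗮ),
    ⟨x₀, AffineSubspace.self_mem_mk' _ _⟩, ?_, ?_⟩
  · rw [AffineSubspace.direction_mk']
    exact hKd
  · ext x
    rw [Set.mem_setOf_eq, SetLike.mem_coe, AffineSubspace.mem_mk']
    have hv : (x -ᵥ x₀ : EuclideanSpace ℝ (Fin m)) = x - x₀ := rfl
    have h2 : (inner ℝ (x - x₀) a : ℝ) = (inner ℝ a x : ℝ) - b := by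
      rw [← hax₀, inner_sub_left, real_inner_comm x a, real_inner_comm x₀ a]
    rw [hv, Submodule.mem_orthogonal_singleton_iff_inner_left, h2, sub_eq_zero]

lemma inner_of_hyperplane {m : ℕ} (hm : 1 ≤ m) (S : Set (EuclideanSpace ℝ (Fin m)))
    (hS : IsAffineHyperplane m S) :
    ∃ a : EuclideanSpace ℝ (Fin m), a ≠ 0 ∧ ∃ b : ℝ, S = {x | (inner ℝ a x : ℝ) = b} := by
  obtain ⟨A, ⟨p, hp⟩, hdim, rfl⟩ := hS
  set W := A.direction with hW
  have hWo : Module.finrank ℝ Wᗮ = 1 := by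
    have h1 := Submodule.finrank_add_finrank_orthogonal W
    rw [hdim, finrank_euclideanSpace_fin] at h1
    omega
  obtain ⟨a, haW, ha⟩ : ∃ a ∈ Wᗮ, a ≠ 0 := by
    by_contra h
    push_neg at h
    have : Wᗮ = ⊥ := by
      ext v
      simp only [Submodule.mem_bot]
      exact ⟨fun hv => by by_contra hv0; exact hv0 (h v hv), fun hv => hv ▸ Wᗮ.zero_mem⟩
    rw [this, finrank_bot] at hWo
    omega
  refine ⟨a, ha, (inner ℝ a p : ℝ), ?_⟩
  have hWK : W = (Submodule.span ℝ {a})ᗮ := by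
    apply Submodule.eq_of_le_of_finrank_le
    · intro w hw
      rw [Submodule.mem_orthogonal_singleton_iff_inner_left]
      exact real_inner_comm a w ▸ haW w hw
    · have h1 := Submodule.finrank_add_finrank_orthogonal (Submodule.span ℝ {a})
      rw [finrank_span_singleton ha, finrank_euclideanSpace_fin] at h1
      omega
  ext x
  rw [SetLike.mem_coe, Set.mem_setOf_eq]
  constructor
  · intro hx
    have hxp : x - p ∈ W := AffineSubspace.vsub_mem_direction hx hp
    rw [hWK, Submodule.mem_orthogonal_singleton_iff_inner_left] at hxp
    have h0 : (inner ℝ a (x - p) : ℝ) = 0 := by rw [real_inner_comm]; exact hxp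
    rw [inner_sub_right] at h0
    exact sub_eq_zero.mp h0
  · intro hx
    have hxp : x - p ∈ W := by
      rw [hWK, Submodule.mem_orthogonal_singleton_iff_inner_left, real_inner_comm,
        inner_sub_right, hx, sub_self]
    have := AffineSubspace.vadd_mem_of_mem_direction (hW ▸ hxp) hp
    simpa using this

lemma quad_eq_sphere_coeffs {α β r : ℝ} {w c : EuclideanSpace ℝ (Fin d)} (hd : 1 ≤ d)
    (hr : 0 < r)
    (h : ∀ x : EuclideanSpace ℝ (Fin d),
      x ∈ Metric.sphere c r ↔ α * ‖x‖ ^ 2 + (inner ℝ w x : ℝ) = β) :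
    α ≠ 0 ∧ w = (-(2 * α)) • c ∧ β = α * (r ^ 2 - ‖c‖ ^ 2) := by
  have hmem : ∀ u : EuclideanSpace ℝ (Fin d), ‖u‖ = 1 →
      α * (‖c‖ ^ 2 + 2 * r * (inner ℝ c u : ℝ) + r ^ 2) + ((inner ℝ w c : ℝ) +
        r * (inner ℝ w u : ℝ)) = β := by
    intro u hu
    have hx : c + r • u ∈ Metric.sphere c r := by
      simp [mem_sphere_iff_norm, norm_smul, abs_of_pos hr, hu]
    have hmm := (h _).mp hx
    rw [norm_add_sq_real, inner_add_right, real_inner_smul_right, real_inner_smul_right,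
      norm_smul, Real.norm_eq_abs, abs_of_pos hr, hu, mul_one] at hmm
    linear_combination hmm
  have hv : (2 * α) • c + w = 0 := by
    by_contra hv0
    set v := (2 * α) • c + w with hvdef
    have hnv : ‖v‖ ≠ 0 := norm_ne_zero_iff.mpr hv0
    set u := ‖v‖⁻¹ • v with hu
    have hu1 : ‖u‖ = 1 := by
      rw [hu, norm_smul, norm_inv, norm_norm, inv_mul_cancel₀ hnv]
    have hu2 : ‖-u‖ = 1 := by rw [norm_neg]; exact hu1
    have e1 := hmem u hu1
    have e2 := hmem (-u) hu2
    rw [inner_neg_right, inner_neg_right] at e2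
    have hinner : (inner ℝ v u : ℝ) = 0 := by
      have : 2 * α * (inner ℝ c u : ℝ) + (inner ℝ w u : ℝ) = 0 := by nlinarith
      rw [hvdef, inner_add_left, real_inner_smul_left]
      linarith
    rw [hu, real_inner_smul_right, real_inner_self_eq_norm_sq] at hinner
    have : ‖v‖ = 0 := by
      have h2 := mul_eq_zero.mp hinner
      rcases h2 with h2 | h2
      · exact absurd h2 (inv_ne_zero hnv)
      · nlinarith [norm_nonneg v]
    exact hnv this
  have hw : w = (-(2 * α)) • c := by
    rw [neg_smul, eq_neg_iff_add_eq_zero, add_comm]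
    exact hv
  refine ⟨?_, hw, ?_⟩
  · intro hα0
    have hw0 : w = 0 := by rw [hw, hα0]; simp
    have hc : c ∈ Metric.sphere c r := by
      rw [h c, hα0, hw0]
      have hβ : β = 0 := by
        have u₀ : EuclideanSpace ℝ (Fin d) := EuclideanSpace.single ⟨0, hd⟩ 1
        have := hmem (EuclideanSpace.single ⟨0, hd⟩ 1) (by
          rw [EuclideanSpace.norm_single]; norm_num)
        rw [hα0, hw0] at this
        simpa using this.symm
      simp [hβ]
    rw [mem_sphere_iff_norm] at hc
    simp at hc
    exact hr.ne' hc.symm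
  · have u1 : ‖(EuclideanSpace.single (⟨0, hd⟩ : Fin d) (1:ℝ))‖ = 1 := by
      rw [EuclideanSpace.norm_single]; norm_num
    have e := hmem _ u1
    rw [hw] at e
    simp only [real_inner_smul_left, real_inner_self_eq_norm_sq] at e
    linear_combination -e

lemma quad_eq_plane_coeffs {α β : ℝ} {w : EuclideanSpace ℝ (Fin d)} (hd : 2 ≤ d)
    (A : AffineSubspace ℝ (EuclideanSpace ℝ (Fin d))) (p : EuclideanSpace ℝ (Fin d))
    (hp : p ∈ A) (hdim : Module.finrank ℝ A.direction = d - 1)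
    (h : ∀ x : EuclideanSpace ℝ (Fin d),
      x ∈ A ↔ α * ‖x‖ ^ 2 + (inner ℝ w x : ℝ) = β) :
    α = 0 ∧ w ≠ 0 ∧ (∀ v ∈ A.direction, (inner ℝ w v : ℝ) = 0) ∧ β = (inner ℝ w p : ℝ) := by
  have hQp : α * ‖p‖ ^ 2 + (inner ℝ w p : ℝ) = β := (h p).mp hp
  have hmem : ∀ v ∈ A.direction, ∀ s : ℝ,
      α * (‖p‖ ^ 2 + 2 * s * (inner ℝ p v : ℝ) + s ^ 2 * ‖v‖ ^ 2)
        + ((inner ℝ w p : ℝ) + s * (inner ℝ w v : ℝ)) = β := by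
    intro v hv s
    have hx : p + s • v ∈ A := by
      have := AffineSubspace.vadd_mem_of_mem_direction (A.direction.smul_mem s hv) hp
      simpa [add_comm] using this
    have hmm := (h _).mp hx
    rw [norm_add_sq_real, inner_add_right, real_inner_smul_right, real_inner_smul_right,
      norm_smul] at hmm
    have habs : (‖s‖ * ‖v‖) ^ 2 = s ^ 2 * ‖v‖ ^ 2 := by
      rw [mul_pow, Real.norm_eq_abs, sq_abs]
    rw [habs] at hmm
    linear_combination hmm
  obtain ⟨v₀, hv₀A, hv₀⟩ : ∃ v ∈ A.direction, v ≠ 0 := by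
    by_contra hc
    push_neg at hc
    have : A.direction = ⊥ := by
      ext v
      simp only [Submodule.mem_bot]
      exact ⟨fun hv => by by_contra h0; exact h0 (hc v hv), fun hv => hv ▸ A.direction.zero_mem⟩
    rw [this, finrank_bot] at hdim
    omega
  have hα : α = 0 := by
    have e1 := hmem v₀ hv₀A 1
    have e2 := hmem v₀ hv₀A (-1)
    have hvn : ‖v₀‖ ^ 2 ≠ 0 := pow_ne_zero 2 (norm_ne_zero_iff.mpr hv₀)
    have : α * ‖v₀‖ ^ 2 = 0 := by nlinarith
    exact (mul_eq_zero.mp this).resolve_right hvn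
  have hβ : β = (inner ℝ w p : ℝ) := by rw [hα] at hQp; linarith
  have hperp : ∀ v ∈ A.direction, (inner ℝ w v : ℝ) = 0 := by
    intro v hv
    have e1 := hmem v hv 1
    rw [hα] at e1
    rw [hβ] at e1
    linarith
  refine ⟨hα, ?_, hperp, hβ⟩
  intro hw0
  have huniv : ∀ x : EuclideanSpace ℝ (Fin d), x ∈ A := by
    intro x
    rw [h x, hα, hw0, hβ, hw0]
    simp
  have : A.direction = ⊤ := by
    rw [Submodule.eq_top_iff']
    intro v
    have : (p + v) -ᵥ p ∈ A.direction := AffineSubspace.vsub_mem_direction (huniv _) hp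
    simpa using this
  rw [this, finrank_top, finrank_euclideanSpace_fin] at hdim
  omega

lemma coeff_unique (hd : 2 ≤ d) {V : Set (EuclideanSpace ℝ (Fin d))} (hV : IsHypersphere d V)
    {α₁ α₂ β₁ β₂ : ℝ} {w₁ w₂ : EuclideanSpace ℝ (Fin d)}
    (h₁ : ∀ x, x ∈ V ↔ α₁ * ‖x‖ ^ 2 + (inner ℝ w₁ x : ℝ) = β₁)
    (h₂ : ∀ x, x ∈ V ↔ α₂ * ‖x‖ ^ 2 + (inner ℝ w₂ x : ℝ) = β₂) :
    ∃ lam : ℝ, lam ≠ 0 ∧ α₂ = lam * α₁ ∧ w₂ = lam • w₁ ∧ β₂ = lam * β₁ := by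
  rcases hV with ⟨c, r, hr, rfl⟩ | ⟨A, ⟨p, hp⟩, hdim, rfl⟩
  · obtain ⟨ha1, hw1, hb1⟩ := quad_eq_sphere_coeffs (by omega) hr h₁
    obtain ⟨ha2, hw2, hb2⟩ := quad_eq_sphere_coeffs (by omega) hr h₂
    refine ⟨α₂ / α₁, div_ne_zero ha2 ha1, by field_simp, ?_, ?_⟩
    · rw [hw1, hw2, smul_smul]
      congr 1
      field_simp
    · rw [hb1, hb2]
      field_simp
  · have h₁' : ∀ x, x ∈ A ↔ α₁ * ‖x‖ ^ 2 + (inner ℝ w₁ x : ℝ) = β₁ := h₁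
    have h₂' : ∀ x, x ∈ A ↔ α₂ * ‖x‖ ^ 2 + (inner ℝ w₂ x : ℝ) = β₂ := h₂
    obtain ⟨ha1, hw1, hperp1, hb1⟩ := quad_eq_plane_coeffs hd A p hp hdim h₁'
    obtain ⟨ha2, hw2, hperp2, hb2⟩ := quad_eq_plane_coeffs hd A p hp hdim h₂'
    have horth : Module.finrank ℝ (A.direction)ᗮ = 1 := by
      have h1 := Submodule.finrank_add_finrank_orthogonal A.direction
      rw [hdim, finrank_euclideanSpace_fin] at h1
      omega
    have hspan : Submodule.span ℝ {w₁} = (A.direction)ᗮ := by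
      apply Submodule.eq_of_le_of_finrank_le
      · rw [Submodule.span_singleton_le_iff_mem, Submodule.mem_orthogonal]
        intro v hv
        rw [real_inner_comm]
        exact hperp1 v hv
      · rw [horth, finrank_span_singleton hw1]
    have hw2mem : w₂ ∈ Submodule.span ℝ {w₁} := by
      rw [hspan, Submodule.mem_orthogonal]
      intro v hv
      rw [real_inner_comm]
      exact hperp2 v hv
    obtain ⟨lam, hlam⟩ := Submodule.mem_span_singleton.mp hw2mem
    refine ⟨lam, ?_, by rw [ha1, ha2, mul_zero], hlam.symm, ?_⟩
    · intro h0
      rw [h0, zero_smul] at hlam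
      exact hw2 hlam.symm
    · rw [hb1, hb2, ← hlam, real_inner_smul_left]

noncomputable def extendVec (w : EuclideanSpace ℝ (Fin d)) (t : ℝ) :
    EuclideanSpace ℝ (Fin (d+1)) :=
  (EuclideanSpace.equiv (Fin (d+1)) ℝ).symm fun j =>
    if h : (j : ℕ) < d then w ⟨j, h⟩ else t

lemma extendVec_castSucc (w : EuclideanSpace ℝ (Fin d)) (t : ℝ) (i : Fin d) :
    extendVec w t i.castSucc = w i := by
  simp [extendVec, EuclideanSpace.equiv, Fin.castSucc, Fin.is_lt]

lemma extendVec_last (w : EuclideanSpace ℝ (Fin d)) (t : ℝ) :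
    extendVec w t (Fin.last d) = t := by
  simp [extendVec, EuclideanSpace.equiv, Fin.last]

lemma headPart_extendVec (w : EuclideanSpace ℝ (Fin d)) (t : ℝ) :
    headPart (extendVec w t) = w := by
  ext i
  rw [headPart_apply, extendVec_castSucc]

/-- the quadratic form of membership in a linear-equation hyperplane, in terms
of head/last data. -/
lemma quad_iff' (u : EuclideanSpace ℝ (Fin d)) (α β : ℝ) (x : EuclideanSpace ℝ (Fin d)) :
    (inner ℝ (extendVec ((2:ℝ)⁻¹ • u) ((α + β)/2)) (invStereo d x) : ℝ) = (β - α)/2 ↔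
      α * ‖x‖ ^ 2 + (inner ℝ u x : ℝ) = β := by
  rw [quad_iff, extendVec_last, headPart_extendVec, real_inner_smul_left]
  constructor <;> intro h <;> linarith

lemma exists_H {V : Set (EuclideanSpace ℝ (Fin d))} {α β : ℝ}
    {u : EuclideanSpace ℝ (Fin d)}
    (hquad : ∀ x, x ∈ V ↔ α * ‖x‖ ^ 2 + (inner ℝ u x : ℝ) = β)
    (hne : u ≠ 0 ∨ α + β ≠ 0) :
    IsAffineHyperplane (d+1)
      {q | (inner ℝ (extendVec ((2:ℝ)⁻¹ • u) ((α + β)/2)) q : ℝ) = (β - α)/2} ∧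
    invStereo d '' V =
      ({q | (inner ℝ (extendVec ((2:ℝ)⁻¹ • u) ((α + β)/2)) q : ℝ) = (β - α)/2} ∩
        Metric.sphere (0 : EuclideanSpace ℝ (Fin (d+1))) 1) \ {northPole d} := by
  have ha : extendVec ((2:ℝ)⁻¹ • u) ((α + β)/2) ≠ 0 := by
    rcases hne with hu | ht
    · intro h0
      apply hu
      have : (2:ℝ)⁻¹ • u = 0 := by
        rw [← headPart_extendVec ((2:ℝ)⁻¹ • u) ((α + β)/2), h0]
        ext i
        simp [headPart_apply]
      have h2 := congrArg (fun z => (2:ℝ) • z) this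
      simpa [smul_smul] using h2
    · intro h0
      apply ht
      have h1 : extendVec ((2:ℝ)⁻¹ • u) ((α + β)/2) (Fin.last d) = 0 := by rw [h0]; rfl
      rw [extendVec_last] at h1
      linarith
  refine ⟨hyperplane_of_inner _ ha _, invStereo_image _ _ ?_⟩
  intro x
  rw [Set.mem_setOf_eq, quad_iff']
  exact hquad x

lemma unique_H (hd : 2 ≤ d) {V : Set (EuclideanSpace ℝ (Fin d))} (hV : IsHypersphere d V)
    {H₁ H₂ : Set (EuclideanSpace ℝ (Fin (d+1)))}
    (h₁ : IsAffineHyperplane (d+1) H₁) (h₂ : IsAffineHyperplane (d+1) H₂)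
    (hi₁ : invStereo d '' V =
      (H₁ ∩ Metric.sphere (0 : EuclideanSpace ℝ (Fin (d+1))) 1) \ {northPole d})
    (hi₂ : invStereo d '' V =
      (H₂ ∩ Metric.sphere (0 : EuclideanSpace ℝ (Fin (d+1))) 1) \ {northPole d}) :
    H₁ = H₂ := by
  obtain ⟨a₁, ha₁, b₁, rfl⟩ := inner_of_hyperplane (by omega) H₁ h₁
  obtain ⟨a₂, ha₂, b₂, rfl⟩ := inner_of_hyperplane (by omega) H₂ h₂
  have hq₁ : ∀ x, x ∈ V ↔ (a₁ (Fin.last d) - b₁) * ‖x‖ ^ 2 +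
      (inner ℝ ((2:ℝ) • headPart a₁) x : ℝ) = a₁ (Fin.last d) + b₁ := by
    intro x
    rw [invStereo_image_rev V _ hi₁ x, Set.mem_setOf_eq, quad_iff, real_inner_smul_left]
    constructor <;> intro h <;> linarith
  have hq₂ : ∀ x, x ∈ V ↔ (a₂ (Fin.last d) - b₂) * ‖x‖ ^ 2 +
      (inner ℝ ((2:ℝ) • headPart a₂) x : ℝ) = a₂ (Fin.last d) + b₂ := by
    intro x
    rw [invStereo_image_rev V _ hi₂ x, Set.mem_setOf_eq, quad_iff, real_inner_smul_left]
    constructor <;> intro h <;> linarith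
  obtain ⟨lam, hlam, hα, hw, hβ⟩ := coeff_unique hd hV hq₁ hq₂
  have ha : a₂ = lam • a₁ := by
    ext j
    refine Fin.lastCases ?_ ?_ j
    · have : (lam • a₁ : EuclideanSpace ℝ (Fin (d+1))) (Fin.last d) = lam * a₁ (Fin.last d) := rfl
      rw [this]
      linarith
    · intro i
      have h1 : ((2:ℝ) • headPart a₂ : EuclideanSpace ℝ (Fin d)) i
          = (lam • ((2:ℝ) • headPart a₁) : EuclideanSpace ℝ (Fin d)) i := by rw [hw]
      have h2 : ((2:ℝ) • headPart a₂ : EuclideanSpace ℝ (Fin d)) i = 2 * a₂ i.castSucc := rfl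
      have h3 : (lam • ((2:ℝ) • headPart a₁) : EuclideanSpace ℝ (Fin d)) i
          = lam * (2 * a₁ i.castSucc) := rfl
      have h4 : (lam • a₁ : EuclideanSpace ℝ (Fin (d+1))) i.castSucc = lam * a₁ i.castSucc := rfl
      rw [h4]
      rw [h2, h3] at h1
      linarith
  have hb : b₂ = lam * b₁ := by linarith
  ext q
  rw [Set.mem_setOf_eq, Set.mem_setOf_eq, ha, hb, real_inner_smul_left]
  exact (mul_right_inj' hlam).symm

lemma norm_sq_eq_iff {r : ℝ} (hr : 0 < r) (v : EuclideanSpace ℝ (Fin d)) :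
    ‖v‖ = r ↔ ‖v‖ ^ 2 = r ^ 2 := by
  constructor
  · intro h; rw [h]
  · intro h; nlinarith [norm_nonneg v]

lemma sphere_quad (c : EuclideanSpace ℝ (Fin d)) {r : ℝ} (hr : 0 < r) (x : EuclideanSpace ℝ (Fin d)) :
    x ∈ Metric.sphere c r ↔
      1 * ‖x‖ ^ 2 + (inner ℝ ((-2:ℝ) • c) x : ℝ) = r ^ 2 - ‖c‖ ^ 2 := by
  rw [mem_sphere_iff_norm, norm_sq_eq_iff hr, norm_sub_sq_real, real_inner_smul_left,
    real_inner_comm]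
  constructor <;> intro h <;> linarith

lemma quad_mem_sphere_iff {α β : ℝ} (hα : α ≠ 0) (u x : EuclideanSpace ℝ (Fin d)) :
    α * ‖x‖ ^ 2 + (inner ℝ u x : ℝ) = β ↔
      α * ‖x - (-(2*α)⁻¹) • u‖ ^ 2 = β + α * ‖(-(2*α)⁻¹) • u‖ ^ 2 := by
  rw [norm_sub_sq_real, real_inner_smul_right]
  have hk : α * (2 * (-(2*α)⁻¹)) = -1 := by
    field_simp
  have hc : (inner ℝ x u : ℝ) = (inner ℝ u x : ℝ) := real_inner_comm u x
  constructor <;> intro h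
  · linear_combination h - (inner ℝ x u : ℝ) * hk + hc
  · linear_combination h + (inner ℝ x u : ℝ) * hk - hc

lemma inner_split (a q : EuclideanSpace ℝ (Fin (d+1))) :
    (inner ℝ a q : ℝ) = (∑ i : Fin d, a i.castSucc * q i.castSucc)
      + a (Fin.last d) * q (Fin.last d) := by
  rw [inner_euclid, Fin.sum_univ_castSucc]

lemma inner_northPole (a : EuclideanSpace ℝ (Fin (d+1))) :
    (inner ℝ a (northPole d) : ℝ) = a (Fin.last d) := by
  rw [inner_split]
  rw [northPole_last, Finset.sum_eq_zero, zero_add, mul_one]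
  intro i _
  rw [northPole_castSucc, mul_zero]


/-- stereographic projection takes hyperplane sections of the sphere to
generalized hyperspheres, and conversely every generalized hypersphere arises from a
unique affine hyperplane. -/
theorem stereo_hyperplane_sections (d : ℕ) (hd : 2 ≤ d) :
    (∀ H : Set (EuclideanSpace ℝ (Fin (d + 1))), IsAffineHyperplane (d + 1) H →
      (∃ x ∈ H ∩ Metric.sphere (0 : EuclideanSpace ℝ (Fin (d + 1))) 1,
        ∃ y ∈ H ∩ Metric.sphere (0 : EuclideanSpace ℝ (Fin (d + 1))) 1, x ≠ y) →
      (northPole d ∉ H →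
        ∃ (c : EuclideanSpace ℝ (Fin d)) (r : ℝ), 0 < r ∧
          stereo d '' (H ∩ Metric.sphere (0 : EuclideanSpace ℝ (Fin (d + 1))) 1) =
            Metric.sphere c r) ∧
      (northPole d ∈ H →
        IsAffineHyperplane d (stereo d ''
          ((H ∩ Metric.sphere (0 : EuclideanSpace ℝ (Fin (d + 1))) 1) \ {northPole d})))) ∧
    (∀ V : Set (EuclideanSpace ℝ (Fin d)), IsHypersphere d V →
      ∃! H : Set (EuclideanSpace ℝ (Fin (d + 1))), IsAffineHyperplane (d + 1) H ∧
        invStereo d '' V =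
          (H ∩ Metric.sphere (0 : EuclideanSpace ℝ (Fin (d + 1))) 1) \ {northPole d}) := by
  constructor
  · intro H hH h2
    obtain ⟨a, ha, b, rfl⟩ := inner_of_hyperplane (by omega) H hH
    set Hs : Set (EuclideanSpace ℝ (Fin (d+1))) := {x | (inner ℝ a x : ℝ) = b} with hHs
    obtain ⟨p₁, hp₁, p₂, hp₂, hpne⟩ := h2
    have hsub : ∀ q ∈ (Hs ∩ Metric.sphere (0 : EuclideanSpace ℝ (Fin (d+1))) 1) \ {northPole d},
        ‖q‖ = 1 ∧ q (Fin.last d) ≠ 1 := by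
      rintro q ⟨⟨_, hqS⟩, hqN⟩
      have hq : ‖q‖ = 1 := (mem_unit_sphere_iff _).mp hqS
      exact ⟨hq, fun hl => hqN (eq_northPole_of_last_eq_one q hq hl)⟩
    have hiff : ∀ x : EuclideanSpace ℝ (Fin d),
        (inner ℝ a (invStereo d x) : ℝ) = b ↔
          (a (Fin.last d) - b) * ‖x‖ ^ 2
            + (inner ℝ ((2:ℝ) • headPart a) x : ℝ) = a (Fin.last d) + b := by
      intro x
      rw [quad_iff, real_inner_smul_left]
      constructor <;> intro h <;> linarith
    have himg : stereo d ''
        ((Hs ∩ Metric.sphere (0 : EuclideanSpace ℝ (Fin (d+1))) 1) \ {northPole d}) =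
        {x | (a (Fin.last d) - b) * ‖x‖ ^ 2
            + (inner ℝ ((2:ℝ) • headPart a) x : ℝ) = a (Fin.last d) + b} := by
      rw [stereo_image _ hsub]
      ext x
      simp only [Set.mem_setOf_eq, Set.mem_diff, Set.mem_inter_iff, Set.mem_singleton_iff]
      constructor
      · rintro ⟨⟨h1, _⟩, _⟩
        exact (hiff x).mp h1
      · intro hx
        exact ⟨⟨(hiff x).mpr hx, (mem_unit_sphere_iff _).mpr (norm_invStereo x)⟩,
          invStereo_ne_northPole x⟩
    constructor
    · -- north pole not in H : sphere case
      intro hN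
      have hα : a (Fin.last d) - b ≠ 0 := by
        intro h0
        exact hN (by rw [hHs, Set.mem_setOf_eq, inner_northPole]; linarith)
      have hset : Hs ∩ Metric.sphere (0 : EuclideanSpace ℝ (Fin (d+1))) 1 =
          (Hs ∩ Metric.sphere (0 : EuclideanSpace ℝ (Fin (d+1))) 1) \ {northPole d} := by
        ext q
        constructor
        · intro hq
          refine ⟨hq, ?_⟩
          simp only [Set.mem_singleton_iff]
          rintro rfl
          exact hN hq.1
        · exact fun hq => hq.1
      set α := a (Fin.last d) - b with hαdef
      set u : EuclideanSpace ℝ (Fin d) := (2:ℝ) • headPart a with hudef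
      set c : EuclideanSpace ℝ (Fin d) := (-(2*α)⁻¹) • u with hcdef
      have hmem : ∀ (p : EuclideanSpace ℝ (Fin (d+1))),
          p ∈ Hs ∩ Metric.sphere (0 : EuclideanSpace ℝ (Fin (d+1))) 1 →
          α * ‖stereo d p - c‖ ^ 2 = (a (Fin.last d) + b) + α * ‖c‖ ^ 2
            ∧ invStereo d (stereo d p) = p := by
        intro p hp
        have hpd : p ∈ (Hs ∩ Metric.sphere (0 : EuclideanSpace ℝ (Fin (d+1))) 1) \ {northPole d} := by
          rw [← hset]; exact hp
        obtain ⟨hq, hl⟩ := hsub p hpd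
        have hinv : invStereo d (stereo d p) = p := invStereo_stereo p hq hl
        have h1 : stereo d p ∈ stereo d ''
            ((Hs ∩ Metric.sphere (0 : EuclideanSpace ℝ (Fin (d+1))) 1) \ {northPole d}) :=
          ⟨p, hpd, rfl⟩
        rw [himg, Set.mem_setOf_eq] at h1
        exact ⟨(quad_mem_sphere_iff hα u (stereo d p)).mp h1, hinv⟩
      obtain ⟨he₁, hi₁⟩ := hmem p₁ hp₁
      obtain ⟨he₂, hi₂⟩ := hmem p₂ hp₂
      have hxne : stereo d p₁ ≠ stereo d p₂ := by
        intro h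
        apply hpne
        rw [← hi₁, ← hi₂, h]
      have hρ2 : ‖stereo d p₂ - c‖ ^ 2 = ‖stereo d p₁ - c‖ ^ 2 :=
        mul_left_cancel₀ hα (he₂.trans he₁.symm)
      have hρ0 : 0 ≤ ‖stereo d p₁ - c‖ ^ 2 := sq_nonneg _
      have hρpos : 0 < ‖stereo d p₁ - c‖ ^ 2 := by
        rcases lt_or_eq_of_le hρ0 with h | h
        · exact h
        · exfalso
          apply hxne
          have h1 : stereo d p₁ = c :=
            sub_eq_zero.mp (norm_eq_zero.mp (sq_eq_zero_iff.mp h.symm))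
          have h2 : stereo d p₂ = c :=
            sub_eq_zero.mp (norm_eq_zero.mp (sq_eq_zero_iff.mp (hρ2.trans h.symm)))
          rw [h1, h2]
      refine ⟨c, Real.sqrt (‖stereo d p₁ - c‖ ^ 2), Real.sqrt_pos.mpr hρpos, ?_⟩
      rw [hset, himg]
      ext x
      rw [Set.mem_setOf_eq, quad_mem_sphere_iff hα u x, mem_sphere_iff_norm,
        norm_sq_eq_iff (Real.sqrt_pos.mpr hρpos), Real.sq_sqrt hρ0, ← he₁]
      exact ⟨fun h => mul_left_cancel₀ hα h, fun h => by rw [h]⟩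
    · -- north pole in H : hyperplane case
      intro hN
      have htb : a (Fin.last d) = b := by
        rw [hHs, Set.mem_setOf_eq, inner_northPole] at hN
        exact hN
      have hw : headPart a ≠ 0 := by
        intro hw0
        have ht0 : a (Fin.last d) ≠ 0 := by
          intro ht0
          apply ha
          ext j
          refine Fin.lastCases ?_ ?_ j
          · rw [ht0]; rfl
          · intro i
            have : headPart a i = 0 := by rw [hw0]; rfl
            rw [headPart_apply] at this
            rw [this]; rfl
        have hpoint : ∀ p, p ∈ Hs ∩ Metric.sphere (0 : EuclideanSpace ℝ (Fin (d+1))) 1 →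
            p = northPole d := by
          rintro p ⟨hp1, hp2⟩
          rw [hHs, Set.mem_setOf_eq, inner_split] at hp1
          have hz : ∀ i : Fin d, a i.castSucc = 0 := by
            intro i
            have : headPart a i = 0 := by rw [hw0]; rfl
            rwa [headPart_apply] at this
          rw [Finset.sum_eq_zero (fun i _ => by rw [hz i, zero_mul]), zero_add] at hp1
          have hl : p (Fin.last d) = 1 := by
            rw [← htb] at hp1
            field_simp at hp1
            exact hp1
          exact eq_northPole_of_last_eq_one p ((mem_unit_sphere_iff _).mp hp2) hl
        exact hpne ((hpoint p₁ hp₁).trans (hpoint p₂ hp₂).symm)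
      rw [himg]
      have hsetq : {x : EuclideanSpace ℝ (Fin d) | (a (Fin.last d) - b) * ‖x‖ ^ 2
          + (inner ℝ ((2:ℝ) • headPart a) x : ℝ) = a (Fin.last d) + b} =
          {x : EuclideanSpace ℝ (Fin d) | (inner ℝ ((2:ℝ) • headPart a) x : ℝ) = 2 * b} := by
        ext x
        rw [Set.mem_setOf_eq, Set.mem_setOf_eq, htb]
        constructor <;> intro h <;> linarith
      rw [hsetq]
      exact hyperplane_of_inner _ (smul_ne_zero two_ne_zero hw) _
  · -- converse
    intro V hV
    have hkey : ∃ (α β : ℝ) (u : EuclideanSpace ℝ (Fin d)),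
        (∀ x, x ∈ V ↔ α * ‖x‖ ^ 2 + (inner ℝ u x : ℝ) = β) ∧ (u ≠ 0 ∨ α + β ≠ 0) := by
      rcases hV with ⟨c, r, hr, rfl⟩ | hplane
      · refine ⟨1, r ^ 2 - ‖c‖ ^ 2, (-2:ℝ) • c, fun x => sphere_quad c hr x, ?_⟩
        by_cases hc : c = 0
        · right
          rw [hc, norm_zero]
          intro h0
          nlinarith [hr]
        · left
          exact smul_ne_zero (by norm_num) hc
      · obtain ⟨u, hu, s, hVeq⟩ := inner_of_hyperplane (by omega) V hplane
        refine ⟨0, s, u, fun x => ?_, Or.inl hu⟩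
        rw [hVeq, Set.mem_setOf_eq, zero_mul, zero_add]
    obtain ⟨α, β, u, hquad, hne⟩ := hkey
    obtain ⟨hyp, himg⟩ := exists_H hquad hne
    refine ⟨_, ⟨hyp, himg⟩, ?_⟩
    rintro H' ⟨h1', h2'⟩
    exact unique_H hd hV h1' hyp h2' himg
end

section
/- Let d ≥ 2, let r ∈ ℝ^d, and let V be a generalized hypersphere of ℝ^d. Let ι_r : ℝ^d \ {r} → ℝ^d \ {r} denote inversion centered at r with radius 1, given by ι_r(x) = r + (x − r)/‖x − r‖². Then there exists a generalized hypersphere W of ℝ^d such that ι_r(V \ {r}) = W \ {r}. In other words, the collection of all hyperspheres and hyperplanes of ℝ^d is closed under inversion. -/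
/-- Inversion of `ℝ^d` centered at `r` with radius `1`:
`x ↦ r + (x − r)/‖x − r‖²`. -/
noncomputable def inversion (d : ℕ) (r : EuclideanSpace ℝ (Fin d))
    (x : EuclideanSpace ℝ (Fin d)) : EuclideanSpace ℝ (Fin d) :=
  r + (‖x - r‖ ^ 2)⁻¹ • (x - r)

open Metric Set AffineSubspace

lemma inversion_eq_E (d : ℕ) (r : EuclideanSpace ℝ (Fin d)) :
    inversion d r = EuclideanGeometry.inversion r 1 := by
  funext x
  simp only [inversion, EuclideanGeometry.inversion, dist_eq_norm, vsub_eq_sub, vadd_eq_add,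
    div_pow, one_pow, one_div, inv_pow]
  abel

lemma dist_inv_sphere {E : Type*} [NormedAddCommGroup E] [InnerProductSpace ℝ E]
    (c y x : E) {ρ k : ℝ} (hρ : dist x y = ρ) (hx : x ≠ c)
    (hk : k = ‖y - c‖ ^ 2 - ρ ^ 2) (hk0 : k ≠ 0) :
    dist (EuclideanGeometry.inversion c 1 x) (c + k⁻¹ • (y - c)) = ρ / |k| := by
  subst hk
  have hu : ‖x - c‖ ≠ 0 := by simpa [sub_eq_zero] using hx
  set k := ‖y - c‖ ^ 2 - ρ ^ 2 with hk
  have key : ‖EuclideanGeometry.inversion c 1 x - (c + k⁻¹ • (y - c))‖ ^ 2 = (ρ / |k|) ^ 2 := by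
    have h1 : EuclideanGeometry.inversion c 1 x - (c + k⁻¹ • (y - c))
        = (‖x - c‖ ^ 2)⁻¹ • (x - c) - k⁻¹ • (y - c) := by
      simp only [EuclideanGeometry.inversion, dist_eq_norm, vsub_eq_sub, vadd_eq_add,
        div_pow, one_pow, one_div, inv_pow]
      abel
    rw [h1, norm_sub_sq_real]
    rw [norm_smul, norm_smul, real_inner_smul_left, real_inner_smul_right]
    have h2 : ρ ^ 2 = ‖x - c‖ ^ 2 - 2 * inner ℝ (x - c) (y - c) + ‖y - c‖ ^ 2 := by
      rw [← hρ, dist_eq_norm]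
      have hxy : x - y = (x - c) - (y - c) := by abel
      rw [hxy, norm_sub_sq_real]
    have hI : (inner ℝ (x - c) (y - c) : ℝ)
        = (‖x - c‖ ^ 2 + ‖y - c‖ ^ 2 - ρ ^ 2) / 2 := by linarith
    have hA : ‖x - c‖ ^ 2 ≠ 0 := pow_ne_zero _ hu
    rw [Real.norm_eq_abs, Real.norm_eq_abs, abs_inv, abs_inv, abs_pow, abs_norm,
      div_pow, sq_abs, hI, hk]
    have hk0' : ‖y - c‖ ^ 2 - ρ ^ 2 ≠ 0 := hk0
    field_simp
    rw [sq_abs]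
    ring
  have h3 : 0 ≤ ρ / |k| := div_nonneg (hρ ▸ dist_nonneg) (abs_nonneg k)
  rw [dist_eq_norm]
  nlinarith [norm_nonneg (EuclideanGeometry.inversion c 1 x - (c + k⁻¹ • (y - c))), key, h3]

lemma image_inv_sphere {E : Type*} [NormedAddCommGroup E] [InnerProductSpace ℝ E]
    (c y : E) {ρ : ℝ} (hρ : 0 < ρ) (hc : dist y c ≠ ρ) :
    EuclideanGeometry.inversion c 1 '' sphere y ρ =
      sphere (c + (‖y - c‖ ^ 2 - ρ ^ 2)⁻¹ • (y - c)) (ρ / |‖y - c‖ ^ 2 - ρ ^ 2|) := by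
  set k := ‖y - c‖ ^ 2 - ρ ^ 2 with hk
  have hyc : ‖y - c‖ ≠ ρ := by rwa [← dist_eq_norm]
  have hk0 : k ≠ 0 := by
    rw [hk, sub_ne_zero]
    intro h
    exact hyc (by nlinarith [norm_nonneg (y - c), hρ.le])
  set c' := c + k⁻¹ • (y - c) with hc'
  set ρ' := ρ / |k| with hρ'
  have hc'c : c' - c = k⁻¹ • (y - c) := by rw [hc']; abel
  have hnc' : ‖c' - c‖ = ‖y - c‖ / |k| := by
    rw [hc'c, norm_smul, Real.norm_eq_abs, abs_inv, inv_mul_eq_div]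
  have hk'0 : (k : ℝ)⁻¹ ≠ 0 := inv_ne_zero hk0
  have hk' : k⁻¹ = ‖c' - c‖ ^ 2 - ρ' ^ 2 := by
    rw [hnc', hρ', div_pow, div_pow, sq_abs, hk]
    field_simp
  have hy' : c + (k⁻¹)⁻¹ • (c' - c) = y := by
    rw [hc'c, inv_inv, smul_smul, mul_inv_cancel₀ hk0, one_smul]
    abel
  have hρ'' : ρ' / |k⁻¹| = ρ := by
    rw [hρ', abs_inv]
    field_simp
  apply Set.Subset.antisymm
  · rintro _ ⟨x, hx, rfl⟩
    have hxc : x ≠ c := by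
      intro h
      apply hc
      rw [dist_comm, ← h]
      exact mem_sphere.mp hx
    exact mem_sphere.mpr (dist_inv_sphere c y x (mem_sphere.mp hx) hxc hk hk0)
  · intro w hw
    have hwc : w ≠ c := by
      intro h
      apply hyc
      have h2 : dist c c' = ρ' := h ▸ mem_sphere.mp hw
      rw [dist_eq_norm, norm_sub_rev, hnc', hρ'] at h2
      field_simp at h2
      exact h2
    have h1 : dist (EuclideanGeometry.inversion c 1 w) y = ρ := by
      have := dist_inv_sphere (k := k⁻¹) c c' w (mem_sphere.mp hw) hwc hk' hk'0
      rwa [hy', hρ''] at this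
    refine ⟨EuclideanGeometry.inversion c 1 w, mem_sphere.mpr h1, ?_⟩
    exact EuclideanGeometry.inversion_involutive c one_ne_zero w

lemma finrank_orth (d : ℕ) (u : EuclideanSpace ℝ (Fin d)) (hu : u ≠ 0) :
    Module.finrank ℝ ((ℝ ∙ u)ᗮ : Submodule ℝ (EuclideanSpace ℝ (Fin d))) = d - 1 := by
  have h := Submodule.finrank_add_finrank_orthogonal (K := (ℝ ∙ u))
  rw [finrank_span_singleton hu] at h
  have hd : Module.finrank ℝ (EuclideanSpace ℝ (Fin d)) = d := finrank_euclideanSpace_fin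
  omega

lemma hyperplane_eq_perpBisector (d : ℕ)
    (A : AffineSubspace ℝ (EuclideanSpace ℝ (Fin d)))
    (hne : (A : Set (EuclideanSpace ℝ (Fin d))).Nonempty)
    (hdim : Module.finrank ℝ A.direction = d - 1) (hd : 2 ≤ d)
    (r : EuclideanSpace ℝ (Fin d)) (hr : r ∉ A) :
    ∃ y, y ≠ r ∧ A = perpBisector r y := by
  haveI : Nonempty A := hne.to_subtype
  set p : EuclideanSpace ℝ (Fin d) := ↑(EuclideanGeometry.orthogonalProjection A r) with hp
  have hpA : p ∈ A := EuclideanGeometry.orthogonalProjection_mem r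
  have hor : r -ᵥ p ∈ A.directionᗮ :=
    EuclideanGeometry.vsub_orthogonalProjection_mem_direction_orthogonal A r
  have hpr : p ≠ r := fun h => hr (h ▸ hpA)
  set y := Equiv.pointReflection p r with hy
  have hyr : y -ᵥ r = (2 : ℝ) • (p -ᵥ r) := by
    rw [hy, Equiv.pointReflection_apply, vadd_vsub_assoc, two_smul]
  have hyne : y ≠ r := by
    intro h
    apply hpr
    have : y -ᵥ r = 0 := by rw [h, vsub_self]
    rw [hyr, smul_eq_zero] at this
    rcases this with h2 | h0
    · norm_num at h2
    · exact vsub_eq_zero_iff_eq.mp h0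
  refine ⟨y, hyne, ?_⟩
  have hdir : A.direction = (perpBisector r y).direction := by
    rw [direction_perpBisector, hyr, Submodule.span_singleton_smul_eq (by norm_num : IsUnit (2:ℝ))]
    apply Submodule.eq_of_le_of_finrank_eq
    · intro v hv
      rw [Submodule.mem_orthogonal_singleton_iff_inner_right]
      have h0 : (inner ℝ v (r -ᵥ p) : ℝ) = 0 := (Submodule.mem_orthogonal _ _).mp hor v hv
      have : (p : EuclideanSpace ℝ (Fin d)) -ᵥ r = -(r -ᵥ p) := by
        rw [neg_vsub_eq_vsub_rev]
      rw [this, inner_neg_left, real_inner_comm, h0, neg_zero]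
    · rw [hdim, finrank_orth d (p -ᵥ r) (vsub_ne_zero.mpr hpr)]
  apply AffineSubspace.ext_of_direction_eq hdir
  refine ⟨p, hpA, ?_⟩
  have := midpoint_mem_perpBisector r y
  rwa [hy, midpoint_pointReflection_right] at this

/-- the collection of generalized hyperspheres is closed under inversion. -/
theorem hypersphere_inversion (d : ℕ) (hd : 2 ≤ d) (r : EuclideanSpace ℝ (Fin d))
    (V : Set (EuclideanSpace ℝ (Fin d))) (hV : IsHypersphere d V) :
    ∃ W : Set (EuclideanSpace ℝ (Fin d)), IsHypersphere d W ∧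
      inversion d r '' (V \ {r}) = W \ {r} := by
  rw [inversion_eq_E]
  have hinj := EuclideanGeometry.inversion_injective r (one_ne_zero (α := ℝ))
  rcases hV with ⟨y, ρ, hρ, rfl⟩ | ⟨A, hne, hdim, rfl⟩
  · by_cases hr : dist y r = ρ
    · -- sphere through the center: image is a hyperplane
      have hyr : y ≠ r := by
        intro h
        rw [h, dist_self] at hr
        exact hρ.ne hr
      have hiy : EuclideanGeometry.inversion r 1 y ≠ r := by
        rw [Ne, EuclideanGeometry.inversion_eq_center one_ne_zero]
        exact hyr
      refine ⟨↑(perpBisector r (EuclideanGeometry.inversion r 1 y)), Or.inr ⟨_, perpBisector_nonempty, ?_, rfl⟩, ?_⟩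
      · rw [direction_perpBisector]
        exact finrank_orth d _ (vsub_ne_zero.mpr hiy)
      · rw [Set.image_diff hinj, Set.image_singleton, EuclideanGeometry.inversion_self,
          ← hr, EuclideanGeometry.image_inversion_sphere_dist_center one_ne_zero hyr]
        ext x
        simp only [Set.mem_diff, Set.mem_insert_iff, Set.mem_singleton_iff]
        tauto
    · -- sphere not through the center: image is a sphere
      set k := ‖y - r‖ ^ 2 - ρ ^ 2 with hk
      have hyc : dist y r ≠ ρ := hr
      have hk0 : k ≠ 0 := by
        rw [hk, sub_ne_zero]
        intro h
        apply hyc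
        rw [dist_eq_norm]
        nlinarith [norm_nonneg (y - r), hρ.le]
      refine ⟨sphere (r + k⁻¹ • (y - r)) (ρ / |k|),
        Or.inl ⟨_, _, div_pos hρ (abs_pos.mpr hk0), rfl⟩, ?_⟩
      have h1 : sphere y ρ \ {r} = sphere y ρ :=
        Set.diff_singleton_eq_self (by
          intro h
          exact hyc (by rw [dist_comm]; exact mem_sphere.mp h))
      have h2 : r ∉ sphere (r + k⁻¹ • (y - r)) (ρ / |k|) := by
        intro h
        have h3 : dist r (r + k⁻¹ • (y - r)) = ‖y - r‖ / |k| := by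
          rw [dist_eq_norm]
          have : r - (r + k⁻¹ • (y - r)) = -(k⁻¹ • (y - r)) := by abel
          rw [this, norm_neg, norm_smul, Real.norm_eq_abs, abs_inv, inv_mul_eq_div]
        rw [mem_sphere, h3] at h
        apply hr
        rw [dist_eq_norm]
        field_simp at h
        exact h
      rw [h1, Set.diff_singleton_eq_self h2]
      exact image_inv_sphere r y hρ hyc
  · by_cases hr : r ∈ A
    · -- hyperplane through the center: image is itself
      refine ⟨↑A, Or.inr ⟨A, hne, hdim, rfl⟩, ?_⟩
      rw [Set.image_diff hinj, Set.image_singleton, EuclideanGeometry.inversion_self,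
        EuclideanGeometry.image_inversion_affineSubspace_of_mem one_ne_zero hr]
    · -- hyperplane not through the center: image is a sphere through the center
      obtain ⟨y, hyne, rfl⟩ := hyperplane_eq_perpBisector d A hne hdim hd r hr
      refine ⟨sphere (EuclideanGeometry.inversion r 1 y) (1 ^ 2 / dist y r),
        Or.inl ⟨_, _, ?_, rfl⟩, ?_⟩
      · have := dist_pos.mpr hyne
        positivity
      · have h1 : (↑(perpBisector r y) : Set (EuclideanSpace ℝ (Fin d))) \ {r}
            = ↑(perpBisector r y) := by
          apply Set.diff_singleton_eq_self
          intro h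
          rw [SetLike.mem_coe, left_mem_perpBisector] at h
          exact hyne h.symm
        rw [h1]
        exact EuclideanGeometry.image_inversion_perpBisector one_ne_zero hyne
end
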